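/- arXiv:2104.09588 — 6 statements merged into one kernel-verified Lean document; each statement's English description precedes it below -/
import Mathlib

section
/- Let K ∈ M_+(ℝ_+×ℝ_+) and let L(t,s) = (K^{*₂})^{*₁}(t,s) be its iterated rearrangement. Then for every f ∈ M_+(ℝ_+) and every t > 0, (T_K f)^{**}(t) ≤ (T_L f*)^{**}(t), where h^{**}(t) = t^{-1} ∫_0^t h*. -/
/-!
Since Lebesgue measure has no atoms, `∫_0^t g*` is the supremum of `∫_E g` over measurable
`E ⊆ ℝ₊` with `|E| ≤ t`: fill `{g > g*(t)}` up to measure `t` with points where `g` is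
arbitrarily close to `g*(t)`. So it suffices to bound `∫_E T_K f` for such `E`. By the
Hardy–Littlewood inequality in `y` and Tonelli,
`∫_E T_K f ≤ ∫_0^∞ f*(s) ∫_E K^{*₂}(x,s) dx ds ≤ ∫_0^∞ f*(s) ∫_0^t L(x,s) dx ds`
`= ∫_0^t T_L f* ≤ ∫_0^t (T_L f*)*`,
where the second and the last step are both `∫_E h ≤ ∫_0^t h*`: for `h = K^{*₂}(·,s)`, whose
rearrangement is `L(·,s)`, and for `h = T_L f*`.
-/

open MeasureTheory Set
open scoped ENNReal

noncomputable section

/-- The positive integral operator `T_K` on `ℝ₊`. -/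
def TK (K : ℝ → ℝ → ℝ≥0∞) (f : ℝ → ℝ≥0∞) (x : ℝ) : ℝ≥0∞ :=
  ∫⁻ y in Ioi (0:ℝ), K x y * f y

/-- Distribution function `μ_f(λ) = |{x ∈ ℝ₊ : f x > λ}|`. -/
def distrib (f : ℝ → ℝ≥0∞) (l : ℝ≥0∞) : ℝ≥0∞ :=
  volume {x : ℝ | 0 < x ∧ l < f x}

/-- Nonincreasing rearrangement `f*(t) = inf{λ : μ_f(λ) ≤ t}`. -/
def rearr (f : ℝ → ℝ≥0∞) (t : ℝ) : ℝ≥0∞ :=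
  sInf {l : ℝ≥0∞ | distrib f l ≤ ENNReal.ofReal t}

/-- Extension of a real function to `ℝ≥0∞`. -/
def extE (F : ℝ → ℝ) (a : ℝ≥0∞) : ℝ≥0∞ :=
  if a = ⊤ then ⊤ else ENNReal.ofReal (F a.toReal)

/-- Orlicz–Lorentz gauge functional `ρ_{Φ,u}`. -/
def ogauge (F : ℝ → ℝ) (u : ℝ → ℝ) (f : ℝ → ℝ≥0∞) : ℝ≥0∞ :=
  sInf {l : ℝ≥0∞ | 0 < l ∧
    (∫⁻ x in Ioi (0:ℝ), extE F (f x / l) * ENNReal.ofReal (u x)) ≤ 1}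

/-- `F` is an N-function with density `φ`: `F x = ∫_0^x φ`, `φ` increasing from `ℝ₊` onto `ℝ₊`. -/
def IsNFunction (F φ : ℝ → ℝ) : Prop :=
  StrictMonoOn φ (Ioi 0) ∧ MapsTo φ (Ioi 0) (Ioi 0) ∧ SurjOn φ (Ioi 0) (Ioi 0) ∧
    ∀ x : ℝ, 0 ≤ x → F x = ∫ y in (0:ℝ)..x, φ y

/-- `F(2t) ≈ F(t)` on `ℝ₊`. -/
def Doubling (F : ℝ → ℝ) : Prop := ∃ C > 0, ∀ t > 0, F (2 * t) ≤ C * F t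

/-- A weight: nonnegative, measurable, locally integrable on `ℝ₊`. -/
def IsWeight (u : ℝ → ℝ) : Prop :=
  Measurable u ∧ (∀ x, 0 ≤ u x) ∧ LocallyIntegrableOn u (Ioi 0)

/-- `U(x) = ∫_0^x u`. -/
def Uw (u : ℝ → ℝ) (x : ℝ) : ℝ := ∫ t in (0:ℝ)..x, u t

/-- `Ψ` (with density `ψ`) is the complementary N-function of the N-function `Φ`
(with density `φ`), i.e. `ψ = φ⁻¹` and `Ψ t = ∫_0^t φ⁻¹`. -/
def IsComplementary (F φ G ψ : ℝ → ℝ) : Prop :=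
  IsNFunction F φ ∧ IsNFunction G ψ ∧ InvOn ψ φ (Ioi 0) (Ioi 0)

/-- `g` is the inverse of `f` on `[0,∞)`. -/
def IsInverseOn (g f : ℝ → ℝ) : Prop :=
  (∀ x ≥ 0, g (f x) = x) ∧ (∀ y ≥ 0, f (g y) = y)

/-- Iterated rearrangement `L(t,s) = (K^{*₂})^{*₁}(t,s)`. -/
def iterRearr (K : ℝ → ℝ → ℝ≥0∞) (t s : ℝ) : ℝ≥0∞ :=
  rearr (fun x => rearr (fun y => K x y) s) t

/-- `α(λ,x) = ∫_x^∞ Φ(λ/U(y)) u(y) dy`. -/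
def hardyAlpha (F : ℝ → ℝ) (u : ℝ → ℝ) (lam x : ℝ) : ℝ≥0∞ :=
  ∫⁻ y in Ioi x, extE F (ENNReal.ofReal lam / ENNReal.ofReal (Uw u y)) * ENNReal.ofReal (u y)

/-- `β(λ,x) = ∫_x^∞ Φ(λ/y) u(y) dy`. -/
def hardyBeta (F : ℝ → ℝ) (u : ℝ → ℝ) (lam x : ℝ) : ℝ≥0∞ :=
  ∫⁻ y in Ioi x, ENNReal.ofReal (F (lam / y)) * ENNReal.ofReal (u y)

/-- The Hardy-averaging conditions (14)–(15) for an N-function `Φ` (density `φ`,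
inverse density `ψ = φ⁻¹`) and weight `u`. -/
def HardyConditions (F φ ψ u : ℝ → ℝ) : Prop :=
  ∃ c > 0, (∀ lam > 0, ∀ x > 0,
      extE φ (ENNReal.ofReal c * hardyAlpha F u lam x / ENNReal.ofReal lam) *
        ENNReal.ofReal (Uw u x) ≤ ENNReal.ofReal (lam / c)) ∧
    (∀ lam > 0, ∀ x > 0,
      (∫⁻ y in Ioo (0:ℝ) x,
        extE ψ ((ENNReal.ofReal c * hardyBeta F u lam x / ENNReal.ofReal lam) *
          ENNReal.ofReal (y / Uw u y)) * ENNReal.ofReal (y * u y / Uw u y))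
        ≤ ENNReal.ofReal (lam / c))

lemma distrib_antitone (h : ℝ → ℝ≥0∞) : Antitone (distrib h) :=
  fun _ _ hab => measure_mono fun _ hx => ⟨hx.1, hab.trans_lt hx.2⟩

/-- Right continuity of the distribution function. -/
lemma distrib_le_of_forall_lt {h : ℝ → ℝ≥0∞} {l c : ℝ≥0∞}
    (H : ∀ l', l < l' → distrib h l' ≤ c) : distrib h l ≤ c := by
  rcases eq_or_ne l ⊤ with rfl | hl
  · simp [distrib]
  obtain ⟨u, hu_anti, hu_mem, hu_lim⟩ := exists_seq_strictAnti_tendsto' hl.lt_top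
  have hunion : {x : ℝ | 0 < x ∧ l < h x} = ⋃ n, {x | 0 < x ∧ u n < h x} := by
    ext x
    simp only [mem_ofPred_eq, mem_iUnion]
    refine ⟨fun ⟨hx, hlx⟩ => ?_, fun ⟨n, hx, hux⟩ => ⟨hx, (hu_mem n).1.trans hux⟩⟩
    obtain ⟨n, hn⟩ := (hu_lim.eventually_lt_const hlx).exists
    exact ⟨n, hx, hn⟩
  have hmono : Monotone fun n => {x : ℝ | 0 < x ∧ u n < h x} :=
    fun _ _ hnm _ hx => ⟨hx.1, (hu_anti.antitone hnm).trans_lt hx.2⟩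
  rw [distrib, hunion, hmono.measure_iUnion]
  exact iSup_le fun n => H _ (hu_mem n).1

lemma rearr_le_iff {h : ℝ → ℝ≥0∞} {l : ℝ≥0∞} {s : ℝ} :
    rearr h s ≤ l ↔ distrib h l ≤ ENNReal.ofReal s := by
  refine ⟨fun hle => distrib_le_of_forall_lt fun l' hl' => ?_, fun hd => sInf_le hd⟩
  obtain ⟨l'', hl''S, hl''⟩ := sInf_lt_iff.mp (hle.trans_lt hl')
  exact (distrib_antitone h hl''.le).trans hl''S

lemma lt_rearr_iff {h : ℝ → ℝ≥0∞} {l : ℝ≥0∞} {s : ℝ} :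
    l < rearr h s ↔ ENNReal.ofReal s < distrib h l := by
  simpa only [not_le] using rearr_le_iff.not

lemma rearr_antitone (h : ℝ → ℝ≥0∞) : Antitone (rearr h) :=
  fun _ _ hab => le_sInf fun _ hl => sInf_le (hl.trans (ENNReal.ofReal_le_ofReal hab))

lemma measurable_rearr (h : ℝ → ℝ≥0∞) : Measurable (rearr h) :=
  (rearr_antitone h).measurable

lemma measurable_distrib_apply {G : ℝ → ℝ → ℝ≥0∞}
    (hG : Measurable (Function.uncurry G)) (l : ℝ≥0∞) :
    Measurable fun x => distrib (G x) l := by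
  convert measurable_measure_prodMk_left (ν := volume)
    ((measurable_snd measurableSet_Ioi).inter (hG measurableSet_Ioi)) using 2
  rfl

lemma measurable_rearr_uncurry {G : ℝ → ℝ → ℝ≥0∞}
    (hG : Measurable (Function.uncurry G)) :
    Measurable fun p : ℝ × ℝ => rearr (G p.1) p.2 := by
  refine measurable_of_Iic fun l => ?_
  have : (fun p : ℝ × ℝ => rearr (G p.1) p.2) ⁻¹' Iic l =
      {p | distrib (G p.1) l ≤ ENNReal.ofReal p.2} := by
    ext p
    exact rearr_le_iff
  rw [this]
  exact measurableSet_le ((measurable_distrib_apply hG l).comp measurable_fst)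
    (ENNReal.measurable_ofReal.comp measurable_snd)

lemma measurable_iterRearr {K : ℝ → ℝ → ℝ≥0∞} (hK : Measurable (Function.uncurry K)) :
    Measurable (Function.uncurry (iterRearr K)) := by
  have hK2 : Measurable (Function.uncurry fun s x => rearr (K x) s) :=
    (measurable_rearr_uncurry hK).comp measurable_swap
  have : Function.uncurry (iterRearr K) =
      (fun p : ℝ × ℝ => rearr (fun x => rearr (K x) p.1) p.2) ∘ Prod.swap := rfl
  rw [this]
  exact (measurable_rearr_uncurry hK2).comp measurable_swap

lemma measurable_TK {K : ℝ → ℝ → ℝ≥0∞} (hK : Measurable (Function.uncurry K))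
    {f : ℝ → ℝ≥0∞} (hf : Measurable f) : Measurable (TK K f) :=
  Measurable.lintegral_prod_right' (hK.mul (hf.comp measurable_snd))

lemma volume_setOf_pos_ofReal_lt (m : ℝ≥0∞) :
    volume {s : ℝ | 0 < s ∧ ENNReal.ofReal s < m} = m := by
  rcases eq_or_ne m ⊤ with rfl | hm
  · simp only [ENNReal.ofReal_lt_top, and_true]
    exact Real.volume_Ioi
  · have : {s : ℝ | 0 < s ∧ ENNReal.ofReal s < m} = Ioo 0 m.toReal := by
      ext s
      simp only [mem_ofPred_eq, mem_Ioo, and_congr_right_iff]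
      exact fun hs => ENNReal.ofReal_lt_iff_lt_toReal hs.le hm
    simp [this, ENNReal.ofReal_toReal hm]

lemma setOf_pos_ofReal_lt_ofReal (t : ℝ) :
    {s : ℝ | 0 < s ∧ ENNReal.ofReal s < ENNReal.ofReal t} = Ioo 0 t := by
  ext s
  simp only [mem_ofPred_eq, mem_Ioo, and_congr_right_iff]
  exact fun hs => ⟨fun h => (ENNReal.ofReal_lt_ofReal_iff'.mp h).1,
    fun h => (ENNReal.ofReal_lt_ofReal_iff (hs.trans h)).mpr h⟩

lemma volume_setOf_lt_rearr_inter (h : ℝ → ℝ≥0∞) (l m : ℝ≥0∞) :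
    volume ({s | l < rearr h s} ∩ {s : ℝ | 0 < s ∧ ENNReal.ofReal s < m}) =
      min m (distrib h l) := by
  rw [← volume_setOf_pos_ofReal_lt (min m _)]
  congr 1
  ext s
  simp only [mem_inter_iff, mem_ofPred_eq, lt_rearr_iff, lt_min_iff]
  tauto

section LayerCake

variable {α : Type*} [MeasurableSpace α] (μ : Measure α) [SFinite μ]

lemma lintegral_mul_eq_lintegral_setLIntegral_lt {k f : α → ℝ≥0∞} (hk : Measurable k)
    (hf : Measurable f) :
    ∫⁻ x, k x * f x ∂μ =
      ∫⁻ l in Ioi (0:ℝ), ∫⁻ x in {x | ENNReal.ofReal l < k x}, f x ∂μ := by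
  set S : Set (α × ℝ) := {p | ENNReal.ofReal p.2 < k p.1}
  have hS : MeasurableSet S :=
    measurableSet_lt (ENNReal.measurable_ofReal.comp measurable_snd) (hk.comp measurable_fst)
  have hk_eq (x : α) : k x = ∫⁻ l in Ioi (0:ℝ), S.indicator 1 (x, l) := by
    have hSx : MeasurableSet {l : ℝ | ENNReal.ofReal l < k x} :=
      measurableSet_lt ENNReal.measurable_ofReal measurable_const
    change k x = ∫⁻ l in Ioi (0:ℝ), {l : ℝ | ENNReal.ofReal l < k x}.indicator 1 l
    rw [lintegral_indicator_one hSx, Measure.restrict_apply hSx, inter_comm]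
    exact (volume_setOf_pos_ofReal_lt (k x)).symm
  calc ∫⁻ x, k x * f x ∂μ
        = ∫⁻ x, (∫⁻ l in Ioi (0:ℝ), S.indicator 1 (x, l) * f x) ∂μ := by
        refine lintegral_congr fun x => ?_
        rw [hk_eq x]
        exact (lintegral_mul_const _
          ((measurable_one.indicator hS).comp measurable_prodMk_left)).symm
    _ = ∫⁻ l in Ioi (0:ℝ), ∫⁻ x, S.indicator 1 (x, l) * f x ∂μ :=
        lintegral_lintegral_swap ((measurable_one.indicator hS).mul
          (hf.comp measurable_fst)).aemeasurable
    _ = _ := by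
        refine lintegral_congr fun l => ?_
        rw [← lintegral_indicator (measurableSet_lt measurable_const hk)]
        refine lintegral_congr fun x => ?_
        by_cases hx : ENNReal.ofReal l < k x <;> simp [S, hx]

lemma lintegral_eq_lintegral_measure_lt {h : α → ℝ≥0∞} (hh : Measurable h) :
    ∫⁻ x, h x ∂μ = ∫⁻ l in Ioi (0:ℝ), μ {x | ENNReal.ofReal l < h x} := by
  simpa only [Pi.one_apply, mul_one, setLIntegral_one] using
    lintegral_mul_eq_lintegral_setLIntegral_lt μ hh measurable_one

end LayerCake

lemma lintegral_lintegral_mul_swap {α β : Type*} [MeasurableSpace α] [MeasurableSpace β]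
    {μ : Measure α} {ν : Measure β} [SFinite μ] [SFinite ν] {G : α → β → ℝ≥0∞}
    (hG : Measurable (Function.uncurry G)) {φ : β → ℝ≥0∞} (hφ : Measurable φ) :
    ∫⁻ x, ∫⁻ s, G x s * φ s ∂ν ∂μ =
      ∫⁻ s, (∫⁻ x, G x s ∂μ) * φ s ∂ν := by
  rw [lintegral_lintegral_swap (hG.mul (hφ.comp measurable_snd)).aemeasurable]
  exact lintegral_congr fun s => lintegral_mul_const _ (hG.comp measurable_prodMk_right)

lemma setLIntegral_le_setLIntegral_rearr {h : ℝ → ℝ≥0∞} (hh : Measurable h) {E : Set ℝ}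
    (hE0 : E ⊆ Ioi 0) {m : ℝ≥0∞} (hEm : volume E ≤ m) :
    ∫⁻ x in E, h x ≤ ∫⁻ s in {s : ℝ | 0 < s ∧ ENNReal.ofReal s < m}, rearr h s := by
  rw [lintegral_eq_lintegral_measure_lt _ hh,
    lintegral_eq_lintegral_measure_lt _ (measurable_rearr h)]
  refine lintegral_mono fun l => ?_
  rw [Measure.restrict_apply (measurableSet_lt measurable_const hh),
    Measure.restrict_apply (measurableSet_lt measurable_const (measurable_rearr h)),
    volume_setOf_lt_rearr_inter]
  exact le_min ((measure_mono inter_subset_right).trans hEm)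
    (measure_mono fun x hx => ⟨hE0 hx.2, hx.1⟩)

lemma setLIntegral_le_setLIntegral_Ioo_rearr {h : ℝ → ℝ≥0∞} (hh : Measurable h)
    {E : Set ℝ} (hE0 : E ⊆ Ioi 0) {t : ℝ} (hEt : volume E ≤ ENNReal.ofReal t) :
    ∫⁻ x in E, h x ≤ ∫⁻ s in Ioo 0 t, rearr h s :=
  setOf_pos_ofReal_lt_ofReal t ▸ setLIntegral_le_setLIntegral_rearr hh hE0 hEt

/-- The Hardy–Littlewood inequality. -/
lemma lintegral_mul_le_lintegral_rearr_mul_rearr {k f : ℝ → ℝ≥0∞} (hk : Measurable k)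
    (hf : Measurable f) :
    ∫⁻ y in Ioi (0:ℝ), k y * f y ≤ ∫⁻ s in Ioi (0:ℝ), rearr k s * rearr f s := by
  rw [lintegral_mul_eq_lintegral_setLIntegral_lt _ hk hf,
    lintegral_mul_eq_lintegral_setLIntegral_lt _ (measurable_rearr k) (measurable_rearr f)]
  refine lintegral_mono fun l => ?_
  have hkl : MeasurableSet {y | ENNReal.ofReal l < k y} := measurableSet_lt measurable_const hk
  have hset : {s | ENNReal.ofReal l < rearr k s} ∩ Ioi 0 =
      {s : ℝ | 0 < s ∧ ENNReal.ofReal s < distrib k (ENNReal.ofReal l)} := by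
    ext s
    simp only [mem_inter_iff, mem_ofPred_eq, mem_Ioi, lt_rearr_iff, and_comm]
  rw [Measure.restrict_restrict hkl,
    Measure.restrict_restrict (measurableSet_lt measurable_const (measurable_rearr k)), hset]
  exact setLIntegral_le_setLIntegral_rearr hf inter_subset_right
    (congrArg volume (inter_comm _ _)).le

lemma exists_subset_volume_eq {W : Set ℝ} (hW : MeasurableSet W) (hW0 : W ⊆ Ioi 0)
    {r : ℝ≥0∞} (hr : r ≤ volume W) (hr_top : r ≠ ⊤) :
    ∃ D ⊆ W, MeasurableSet D ∧ volume D = r := by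
  rcases hr.eq_or_lt with rfl | hlt
  · exact ⟨W, subset_rfl, hW, rfl⟩
  have hmono : Monotone fun n : ℕ => W ∩ Ioc 0 n :=
    fun _ _ hnm => inter_subset_inter_right _ (Ioc_subset_Ioc_right (Nat.cast_le.mpr hnm))
  have hunion : W = ⋃ n : ℕ, W ∩ Ioc 0 n := by
    refine Subset.antisymm (fun x hx => ?_) (iUnion_subset fun _ => inter_subset_left)
    obtain ⟨n, hn⟩ := exists_nat_ge x
    exact mem_iUnion.mpr ⟨n, hx, hW0 hx, hn⟩
  obtain ⟨n, hn⟩ : ∃ n : ℕ, r < volume (W ∩ Ioc 0 n) := by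
    rwa [hunion, hmono.measure_iUnion, lt_iSup_iff] at hlt
  -- the primitive of the indicator of `W` is continuous, so it takes every intermediate value
  set φ : ℝ → ℝ := fun c => ∫ x in (0:ℝ)..c, W.indicator 1 x
  have hφ_cont : Continuous φ := intervalIntegral.continuous_primitive (fun a b =>
    intervalIntegrable_iff.mpr ((integrableOn_const (by simp)).indicator hW)) 0
  have hφ_eq (c : ℝ) (hc : 0 ≤ c) : φ c = volume.real (W ∩ Ioc 0 c) := by
    simp only [φ, intervalIntegral.integral_of_le hc, integral_indicator_one hW,
      measureReal_restrict_apply hW]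
  have hfin (c : ℝ) : volume (W ∩ Ioc 0 c) ≠ ⊤ :=
    (measure_mono inter_subset_right).trans_lt measure_Ioc_lt_top |>.ne
  have hr_mem : r.toReal ∈ Icc (φ 0) (φ n) := by
    rw [hφ_eq 0 le_rfl, hφ_eq n (Nat.cast_nonneg n)]
    exact ⟨ENNReal.toReal_nonneg.trans' (by simp), ENNReal.toReal_mono (hfin n) hn.le⟩
  obtain ⟨c, hc, hφc⟩ :=
    intermediate_value_Icc (Nat.cast_nonneg n) hφ_cont.continuousOn hr_mem
  refine ⟨W ∩ Ioc 0 c, inter_subset_left, hW.inter measurableSet_Ioc, ?_⟩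
  rw [hφ_eq c hc.1] at hφc
  exact (ENNReal.toReal_eq_toReal_iff' (hfin c) hr_top).mp hφc

/-- On `(0, t)` the rearrangement exceeds `τ = g*(t)` exactly on an interval of length
`μ_g(τ)`, where its integral is that of `g` over `{g > τ}`; on the rest it is at most `τ`. -/
lemma setLIntegral_Ioo_rearr_le {g : ℝ → ℝ≥0∞} (hg : Measurable g) (t : ℝ) :
    ∫⁻ s in Ioo 0 t, rearr g s ≤
      (∫⁻ x in {x | 0 < x ∧ rearr g t < g x}, g x) +
        (ENNReal.ofReal t - distrib g (rearr g t)) * rearr g t := by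
  set τ := rearr g t
  set F := {x : ℝ | 0 < x ∧ τ < g x}
  set T := ENNReal.ofReal t
  have hmT : distrib g τ ≤ T := rearr_le_iff.mp le_rfl
  have hτ : MeasurableSet {l : ℝ | ENNReal.ofReal l < τ} :=
    measurableSet_lt ENNReal.measurable_ofReal measurable_const
  have hflat : (T - distrib g τ) * τ =
      ∫⁻ l in Ioi (0:ℝ),
        {l : ℝ | ENNReal.ofReal l < τ}.indicator (fun _ => T - distrib g τ) l := by
    rw [lintegral_indicator_const hτ, Measure.restrict_apply hτ, inter_comm]
    exact congrArg _ (volume_setOf_pos_ofReal_lt τ).symm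
  rw [lintegral_eq_lintegral_measure_lt _ (measurable_rearr g),
    lintegral_eq_lintegral_measure_lt _ hg, hflat,
    ← lintegral_add_right _ (measurable_const.indicator hτ)]
  refine lintegral_mono fun l => ?_
  rw [Measure.restrict_apply (measurableSet_lt measurable_const (measurable_rearr g)),
    ← setOf_pos_ofReal_lt_ofReal, volume_setOf_lt_rearr_inter,
    Measure.restrict_apply (measurableSet_lt measurable_const hg)]
  rcases lt_or_ge (ENNReal.ofReal l) τ with hl | hl
  · have hF : {x | ENNReal.ofReal l < g x} ∩ F = F :=
      inter_eq_right.mpr fun x hx => hl.trans hx.2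
    rw [hF, indicator_of_mem (show l ∈ {l : ℝ | ENNReal.ofReal l < τ} from hl)]
    calc min T _ ≤ T := min_le_left _ _
      _ = distrib g τ + (T - distrib g τ) := (add_tsub_cancel_of_le hmT).symm
  · have hF : {x | ENNReal.ofReal l < g x} ∩ F = {x | 0 < x ∧ ENNReal.ofReal l < g x} := by
      ext x
      exact ⟨fun hx => ⟨hx.2.1, hx.1⟩, fun hx => ⟨hx.2, hx.1, hl.trans_lt hx.2⟩⟩
    rw [hF, indicator_of_notMem (show l ∉ {l : ℝ | ENNReal.ofReal l < τ} from not_lt.mpr hl),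
      add_zero]
    exact min_le_right _ _

lemma setLIntegral_Ioo_rearr_le_of_forall {g : ℝ → ℝ≥0∞} (hg : Measurable g) {t : ℝ}
    {C : ℝ≥0∞}
    (hC : ∀ E : Set ℝ, MeasurableSet E → E ⊆ Ioi 0 → volume E ≤ ENNReal.ofReal t →
      ∫⁻ x in E, g x ≤ C) :
    ∫⁻ s in Ioo 0 t, rearr g s ≤ C := by
  refine (setLIntegral_Ioo_rearr_le hg t).trans ?_
  set τ := rearr g t
  set F := {x : ℝ | 0 < x ∧ τ < g x}
  set T := ENNReal.ofReal t
  have hFm : MeasurableSet F := measurableSet_Ioi.inter (measurableSet_lt measurable_const hg)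
  have hmT : distrib g τ ≤ T := rearr_le_iff.mp le_rfl
  have hFC : ∫⁻ x in F, g x ≤ C := hC F hFm (fun x hx => hx.1) hmT
  -- for `l < τ`, enlarge `F` to measure `t` by points where `g > l`
  have hlevel (l : ℝ≥0∞) (hl : l < τ) :
      (∫⁻ x in F, g x) + l * (T - distrib g τ) ≤ C := by
    set S := {x : ℝ | 0 < x ∧ l < g x}
    have hSm : MeasurableSet S := measurableSet_Ioi.inter (measurableSet_lt measurable_const hg)
    have hSF : T - distrib g τ ≤ volume (S \ F) :=
      (tsub_le_tsub_right (lt_rearr_iff.mp hl).le _).trans le_measure_sdiff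
    obtain ⟨D, hDSF, hDm, hDvol⟩ := exists_subset_volume_eq (hSm.diff hFm) (fun x hx => hx.1.1)
      hSF (ne_top_of_le_ne_top ENNReal.ofReal_ne_top tsub_le_self)
    have hFD : volume (F ∪ D) ≤ T :=
      (measure_union_le _ _).trans (by rw [hDvol]; exact (add_tsub_cancel_of_le hmT).le)
    calc (∫⁻ x in F, g x) + l * (T - distrib g τ)
          = (∫⁻ x in F, g x) + ∫⁻ _ in D, l := by
          rw [setLIntegral_const, hDvol]
      _ ≤ (∫⁻ x in F, g x) + ∫⁻ x in D, g x :=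
          add_le_add_right (setLIntegral_mono hg fun x hx => (hDSF hx).1.2.le) _
      _ = ∫⁻ x in F ∪ D, g x :=
          (lintegral_union hDm (disjoint_left.mpr fun _ hxF hxD => (hDSF hxD).2 hxF)).symm
      _ ≤ C := hC _ (hFm.union hDm)
          (union_subset (fun x hx => hx.1) fun x hx => (hDSF hx).1.1) hFD
  rcases eq_or_ne C ⊤ with hC_top | hC_top
  · exact hC_top ▸ le_top
  have hF_top : ∫⁻ x in F, g x ≠ ⊤ := ne_top_of_le_ne_top hC_top hFC
  have hτ : τ * (T - distrib g τ) ≤ C - ∫⁻ x in F, g x :=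
    ENNReal.mul_le_of_forall_lt fun l hl c hc =>
      (mul_le_mul_right hc.le l).trans (ENNReal.le_sub_of_add_le_left hF_top (hlevel l hl))
  calc (∫⁻ x in F, g x) + (T - distrib g τ) * τ
        ≤ (∫⁻ x in F, g x) + (C - ∫⁻ x in F, g x) := by
        rw [mul_comm]; exact add_le_add_right hτ _
    _ = C := add_tsub_cancel_of_le hFC

theorem statement4_general
    (K : ℝ → ℝ → ℝ≥0∞) (hK : Measurable (Function.uncurry K))
    (f : ℝ → ℝ≥0∞) (hf : Measurable f) (t : ℝ) :
    (∫⁻ s in Ioo (0:ℝ) t, rearr (TK K f) s) / ENNReal.ofReal t ≤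
      (∫⁻ s in Ioo (0:ℝ) t, rearr (TK (iterRearr K) (rearr f)) s) / ENNReal.ofReal t := by
  have hK2 : Measurable (Function.uncurry fun x s => rearr (K x) s) := measurable_rearr_uncurry hK
  have hL := measurable_iterRearr hK
  refine ENNReal.div_le_div_right
    (setLIntegral_Ioo_rearr_le_of_forall (measurable_TK hK hf) fun E _ hE0 hEt => ?_) _
  calc ∫⁻ x in E, TK K f x
      ≤ ∫⁻ x in E, ∫⁻ s in Ioi (0:ℝ), rearr (K x) s * rearr f s :=
        lintegral_mono fun x =>
          lintegral_mul_le_lintegral_rearr_mul_rearr (hK.comp measurable_prodMk_left) hf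
    _ = ∫⁻ s in Ioi (0:ℝ), (∫⁻ x in E, rearr (K x) s) * rearr f s :=
        lintegral_lintegral_mul_swap hK2 (measurable_rearr f)
    _ ≤ ∫⁻ s in Ioi (0:ℝ), (∫⁻ x in Ioo 0 t, iterRearr K x s) * rearr f s := by
        refine lintegral_mono fun s => mul_le_mul_left ?_ _
        exact setLIntegral_le_setLIntegral_Ioo_rearr (hK2.comp measurable_prodMk_right) hE0 hEt
    _ = ∫⁻ x in Ioo 0 t, TK (iterRearr K) (rearr f) x :=
        (lintegral_lintegral_mul_swap hL (measurable_rearr f)).symm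
    _ ≤ ∫⁻ s in Ioo 0 t, rearr (TK (iterRearr K) (rearr f)) s :=
        setLIntegral_le_setLIntegral_Ioo_rearr (measurable_TK hL (measurable_rearr f))
          Ioo_subset_Ioi_self (by simp)

theorem statement4
    (K : ℝ → ℝ → ℝ≥0∞) (hK : Measurable (Function.uncurry K))
    (f : ℝ → ℝ≥0∞) (hf : Measurable f) (t : ℝ) (ht : 0 < t) :
    (∫⁻ s in Ioo (0:ℝ) t, rearr (TK K f) s) / ENNReal.ofReal t ≤
      (∫⁻ s in Ioo (0:ℝ) t, rearr (TK (iterRearr K) (rearr f)) s) / ENNReal.ofReal t :=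
  statement4_general K hK f hf t

end
end

section
/- Let k: ℝ_+ → [0,∞) be nonincreasing with k(t/2) ≤ C k(t) for all t ∈ ℝ_+ and ∫_0^a k(√(x²+y²)) dy < ∞ for all a, x ∈ ℝ_+, and set K(x,y) = k(√(x²+y²)). Then there is a constant C' > 1, independent of f ∈ M_+(ℝ_+) and x ∈ ℝ_+, such that (1/C') (T_K f)(x) ≤ k(x) ∫_0^x f(y) dy + ∫_x^∞ k(y) f(y) dy ≤ C' (T_K f)(x). -/
open MeasureTheory Set
open scoped ENNReal

noncomputable section

lemma key_bounds (k : ℝ → ℝ) (hkmono : AntitoneOn k (Ioi 0))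
    (C : ℝ) (hC : 0 < C) (hdouble : ∀ t > 0, k (t / 2) ≤ C * k t)
    (x y : ℝ) (hx : 0 < x) (hy : 0 < y) :
    k (max x y) ≤ C * k (Real.sqrt (x ^ 2 + y ^ 2)) ∧
      k (Real.sqrt (x ^ 2 + y ^ 2)) ≤ k (max x y) := by
  set m := max x y with hm
  have hm0 : 0 < m := lt_max_of_lt_left hx
  have hsum : x ^ 2 + y ^ 2 ≤ 2 * m ^ 2 := by
    have h1 : x ^ 2 ≤ m ^ 2 := by
      apply pow_le_pow_left₀ hx.le (le_max_left _ _)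
    have h2 : y ^ 2 ≤ m ^ 2 := by
      apply pow_le_pow_left₀ hy.le (le_max_right _ _)
    linarith
  have hml : m ≤ Real.sqrt (x ^ 2 + y ^ 2) := by
    rw [show m = Real.sqrt (m ^ 2) by rw [Real.sqrt_sq hm0.le]]
    apply Real.sqrt_le_sqrt
    rcases max_cases x y with ⟨h, _⟩ | ⟨h, _⟩ <;> rw [hm, h] <;> nlinarith
  have hmu : Real.sqrt (x ^ 2 + y ^ 2) ≤ 2 * m := by
    rw [show 2 * m = Real.sqrt ((2 * m) ^ 2) by rw [Real.sqrt_sq (by linarith)]]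
    apply Real.sqrt_le_sqrt; nlinarith
  have hs0 : (0:ℝ) < Real.sqrt (x ^ 2 + y ^ 2) := lt_of_lt_of_le hm0 hml
  constructor
  · have h1 : k m ≤ C * k (2 * m) := by
      have := hdouble (2 * m) (by linarith)
      simpa [mul_div_assoc] using this
    have h2 : k (2 * m) ≤ k (Real.sqrt (x ^ 2 + y ^ 2)) :=
      hkmono hs0 (by simp only [mem_Ioi]; linarith) hmu
    calc k m ≤ C * k (2 * m) := h1
      _ ≤ C * k (Real.sqrt (x ^ 2 + y ^ 2)) := by
          exact mul_le_mul_of_nonneg_left h2 hC.le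
  · exact hkmono hm0 hs0 hml

theorem statement11
    (k : ℝ → ℝ) (hkmeas : Measurable k) (hknn : ∀ t > 0, 0 ≤ k t)
    (hkmono : AntitoneOn k (Ioi 0))
    (C : ℝ) (hC : 0 < C) (hdouble : ∀ t > 0, k (t / 2) ≤ C * k t)
    (hloc : ∀ a > 0, ∀ x > 0,
      (∫⁻ y in Ioo (0:ℝ) a, ENNReal.ofReal (k (Real.sqrt (x ^ 2 + y ^ 2)))) < ⊤) :
    ∃ C' > 1, ∀ f : ℝ → ℝ≥0∞, Measurable f → ∀ x > 0,
      ENNReal.ofReal (1 / C') *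
          TK (fun x y => ENNReal.ofReal (k (Real.sqrt (x ^ 2 + y ^ 2)))) f x ≤
        ENNReal.ofReal (k x) * (∫⁻ y in Ioo (0:ℝ) x, f y) +
          (∫⁻ y in Ioi x, ENNReal.ofReal (k y) * f y) ∧
      ENNReal.ofReal (k x) * (∫⁻ y in Ioo (0:ℝ) x, f y) +
          (∫⁻ y in Ioi x, ENNReal.ofReal (k y) * f y) ≤
        ENNReal.ofReal C' *
          TK (fun x y => ENNReal.ofReal (k (Real.sqrt (x ^ 2 + y ^ 2)))) f x := by
  refine ⟨C + 2, by linarith, ?_⟩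
  intro f hf x hx
  have hdisj : Disjoint (Ioo (0:ℝ) x) (Ici x) := by
    rw [Set.disjoint_left]
    rintro a ⟨_, h2⟩ h3
    exact absurd h3 (not_le.2 h2)
  have hsplit : ∀ h : ℝ → ℝ≥0∞, (∫⁻ y in Ioi (0:ℝ), h y) =
      (∫⁻ y in Ioo (0:ℝ) x, h y) + ∫⁻ y in Ioi x, h y := by
    intro h
    rw [← Set.Ioo_union_Ici_eq_Ioi hx, lintegral_union measurableSet_Ici hdisj]
    congr 1
    exact setLIntegral_congr (μ := volume) (Ioi_ae_eq_Ici (a := x)).symm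
  have hTK : TK (fun x y => ENNReal.ofReal (k (Real.sqrt (x ^ 2 + y ^ 2)))) f x =
      (∫⁻ y in Ioo (0:ℝ) x, ENNReal.ofReal (k (Real.sqrt (x ^ 2 + y ^ 2))) * f y) +
        ∫⁻ y in Ioi x, ENNReal.ofReal (k (Real.sqrt (x ^ 2 + y ^ 2))) * f y := by
    exact hsplit _
  -- upper bound: TK ≤ RHS
  have hupper : TK (fun x y => ENNReal.ofReal (k (Real.sqrt (x ^ 2 + y ^ 2)))) f x ≤
      ENNReal.ofReal (k x) * (∫⁻ y in Ioo (0:ℝ) x, f y) +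
        ∫⁻ y in Ioi x, ENNReal.ofReal (k y) * f y := by
    rw [hTK, ← lintegral_const_mul' _ _ (by simp : ENNReal.ofReal (k x) ≠ ⊤)]
    apply add_le_add
    · apply setLIntegral_mono' measurableSet_Ioo
      intro y hy
      apply mul_le_mul_left
      apply ENNReal.ofReal_le_ofReal
      have := (key_bounds k hkmono C hC hdouble x y hx hy.1).2
      rwa [max_eq_left hy.2.le] at this
    · apply setLIntegral_mono' measurableSet_Ioi
      intro y hy
      apply mul_le_mul_left
      apply ENNReal.ofReal_le_ofReal
      have hy0 : 0 < y := lt_trans hx hy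
      have := (key_bounds k hkmono C hC hdouble x y hx hy0).2
      rwa [max_eq_right (le_of_lt hy)] at this
  -- lower bound: RHS ≤ C * TK
  have hlower : ENNReal.ofReal (k x) * (∫⁻ y in Ioo (0:ℝ) x, f y) +
        (∫⁻ y in Ioi x, ENNReal.ofReal (k y) * f y) ≤
      ENNReal.ofReal C * TK (fun x y => ENNReal.ofReal (k (Real.sqrt (x ^ 2 + y ^ 2)))) f x := by
    rw [hTK, mul_add]
    apply add_le_add
    · rw [← lintegral_const_mul' _ _ (by simp : ENNReal.ofReal (k x) ≠ ⊤),
        ← lintegral_const_mul' _ _ (by simp : ENNReal.ofReal C ≠ ⊤)]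
      apply setLIntegral_mono' measurableSet_Ioo
      intro y hy
      rw [← mul_assoc]
      apply mul_le_mul_left
      rw [← ENNReal.ofReal_mul hC.le]
      apply ENNReal.ofReal_le_ofReal
      have := (key_bounds k hkmono C hC hdouble x y hx hy.1).1
      rwa [max_eq_left hy.2.le] at this
    · rw [← lintegral_const_mul' _ _ (by simp : ENNReal.ofReal C ≠ ⊤)]
      apply setLIntegral_mono' measurableSet_Ioi
      intro y hy
      rw [← mul_assoc]
      apply mul_le_mul_left
      rw [← ENNReal.ofReal_mul hC.le]
      apply ENNReal.ofReal_le_ofReal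
      have hy0 : 0 < y := lt_trans hx hy
      have := (key_bounds k hkmono C hC hdouble x y hx hy0).1
      rwa [max_eq_right (le_of_lt hy)] at this
  constructor
  · calc ENNReal.ofReal (1 / (C + 2)) *
          TK (fun x y => ENNReal.ofReal (k (Real.sqrt (x ^ 2 + y ^ 2)))) f x
        ≤ 1 * TK (fun x y => ENNReal.ofReal (k (Real.sqrt (x ^ 2 + y ^ 2)))) f x := by
          apply mul_le_mul_left
          rw [show (1:ℝ≥0∞) = ENNReal.ofReal 1 by simp]
          apply ENNReal.ofReal_le_ofReal
          rw [div_le_one (by linarith)]; linarith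
      _ ≤ _ := by rw [one_mul]; exact hupper
  · calc ENNReal.ofReal (k x) * (∫⁻ y in Ioo (0:ℝ) x, f y) +
          (∫⁻ y in Ioi x, ENNReal.ofReal (k y) * f y)
        ≤ ENNReal.ofReal C *
          TK (fun x y => ENNReal.ofReal (k (Real.sqrt (x ^ 2 + y ^ 2)))) f x := hlower
      _ ≤ _ := by
          apply mul_le_mul_left
          exact ENNReal.ofReal_le_ofReal (by linarith)

end
end

section
/- Fix 1 < p ≤ q < ∞, p' = p/(p-1), and let k ∈ M_+(ℝ_+). Then there is a constant c > 0 such that [ ∫_{ℝ_+} ( k(x) ∫_0^x f(y) dy )^q dx ]^{1/q} ≤ c [ ∫_{ℝ_+} f(y)^p dy ]^{1/p} for all f ∈ M_+(ℝ_+), if and only if sup_{x>0} x ( ∫_x^∞ k(y)^q dy )^{p'/q} < ∞. -/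
open MeasureTheory Set
open scoped ENNReal

noncomputable section

/-!
Testing the inequality on `f = 1_(0,x)` gives `x (∫_x^∞ k^q)^(1/q) ≤ c x^(1/p)`, so the supremum
is at most `c^p'`.

Conversely, suppose `∫_z^∞ k^q ≤ A z^(-q/p')`. Hölder's inequality with the weight `y^(1/(2p'))`
bounds `(∫_0^x f)^q` by a multiple of `‖f‖_p^(q-p) x^(q/p'-s) ∫_0^x f^p y^s`, where `s = p/(2p')`.
Integrating against `k^q` and exchanging the order of integration leaves
`∫ f(y)^p y^s (∫_y^∞ k^q x^(q/p'-s) dx) dy`; summing the tail bound over the dyadic intervals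
`[2^n y, 2^(n+1) y)` shows that the inner integral is `O(y^(-s))`, which cancels the weight.
-/

theorem lintegral_mul_lintegral_Ioo_swap {Φ g : ℝ → ℝ≥0∞} (hΦ : Measurable Φ)
    (hg : Measurable g) :
    ∫⁻ x in Ioi (0:ℝ), Φ x * ∫⁻ y in Ioo (0:ℝ) x, g y =
      ∫⁻ y in Ioi (0:ℝ), g y * ∫⁻ x in Ioi y, Φ x := by
  set μ := volume.restrict (Ioi (0:ℝ))
  have hmeas : Measurable
      (Function.uncurry fun x y : ℝ => (Iio x).indicator (fun y => Φ x * g y) y) :=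
    Measurable.ite (measurableSet_lt measurable_snd measurable_fst)
      ((hΦ.comp measurable_fst).mul (hg.comp measurable_snd)) measurable_const
  calc ∫⁻ x in Ioi (0:ℝ), Φ x * ∫⁻ y in Ioo (0:ℝ) x, g y
      = ∫⁻ x, ∫⁻ y, (Iio x).indicator (fun y => Φ x * g y) y ∂μ ∂μ := by
        refine setLIntegral_congr_fun measurableSet_Ioi fun x _ => ?_
        rw [lintegral_indicator measurableSet_Iio, Measure.restrict_restrict measurableSet_Iio,
          Iio_inter_Ioi, lintegral_const_mul _ hg]
    _ = ∫⁻ y, ∫⁻ x, (Iio x).indicator (fun y => Φ x * g y) y ∂μ ∂μ :=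
        lintegral_lintegral_swap hmeas.aemeasurable
    _ = ∫⁻ y in Ioi (0:ℝ), g y * ∫⁻ x in Ioi y, Φ x := by
        refine setLIntegral_congr_fun measurableSet_Ioi fun y hy => ?_
        have hind : (fun x => (Iio x).indicator (fun y => Φ x * g y) y) =
            (Ioi y).indicator fun x => Φ x * g y := by
          ext x; simp [indicator_apply]
        rw [hind, lintegral_indicator measurableSet_Ioi,
          Measure.restrict_restrict measurableSet_Ioi,
          inter_eq_self_of_subset_left (Ioi_subset_Ioi hy.le), lintegral_mul_const _ hΦ, mul_comm]

theorem lintegral_Ioo_rpow_neg_half {x : ℝ} (hx : 0 < x) :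
    ∫⁻ y in Ioo (0:ℝ) x, ENNReal.ofReal y ^ (-2⁻¹ : ℝ) = 2 * ENNReal.ofReal x ^ (2⁻¹ : ℝ) := by
  have hint : IntegrableOn (fun y : ℝ => y ^ (-2⁻¹ : ℝ)) (Ioc 0 x) :=
    (intervalIntegrable_iff_integrableOn_Ioc_of_le hx.le).mp
      (intervalIntegral.intervalIntegrable_rpow' (by norm_num))
  calc ∫⁻ y in Ioo (0:ℝ) x, ENNReal.ofReal y ^ (-2⁻¹ : ℝ)
      = ∫⁻ y in Ioc (0:ℝ) x, ENNReal.ofReal (y ^ (-2⁻¹ : ℝ)) := by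
        rw [← setLIntegral_congr Ioo_ae_eq_Ioc]
        exact setLIntegral_congr_fun measurableSet_Ioo fun y hy =>
          ENNReal.ofReal_rpow_of_pos hy.1
    _ = ENNReal.ofReal (∫ y in (0:ℝ)..x, y ^ (-2⁻¹ : ℝ)) := by
        rw [intervalIntegral.integral_of_le hx.le, ofReal_integral_eq_lintegral_ofReal hint]
        exact (ae_restrict_mem measurableSet_Ioc).mono fun y hy => Real.rpow_nonneg hy.1.le _
    _ = ENNReal.ofReal (2 * x ^ (2⁻¹ : ℝ)) := by
        rw [integral_rpow (Or.inl (by norm_num)), Real.zero_rpow (by norm_num)]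
        congr 1
        norm_num
        ring
    _ = 2 * ENNReal.ofReal x ^ (2⁻¹ : ℝ) := by
        rw [ENNReal.ofReal_mul zero_le_two, ENNReal.ofReal_ofNat, ENNReal.ofReal_rpow_of_pos hx]

theorem ofReal_two_pow_mul_rpow (n : ℕ) (y c : ℝ) :
    ENNReal.ofReal (2 ^ n * y) ^ c = ((2:ℝ≥0∞) ^ c) ^ n * ENNReal.ofReal y ^ c := by
  rw [ENNReal.ofReal_mul (by positivity), ENNReal.ofReal_pow zero_le_two, ENNReal.ofReal_ofNat,
    ENNReal.mul_rpow_of_ne_top (ENNReal.pow_ne_top ENNReal.ofNat_ne_top) ENNReal.ofReal_ne_top,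
    ← ENNReal.rpow_natCast, ← ENNReal.rpow_mul, mul_comm (n : ℝ), ENNReal.rpow_mul,
    ENNReal.rpow_natCast]

theorem setLIntegral_Ioi_mul_rpow_le {a b : ℝ} (ha : 0 ≤ a) {V : ℝ → ℝ≥0∞} (hV : Measurable V)
    {A : ℝ≥0∞} (hA : ∀ z > 0, ∫⁻ t in Ioi z, V t ≤ A * ENNReal.ofReal z ^ (-b))
    {y : ℝ} (hy : 0 < y) :
    ∫⁻ x in Ioi y, V x * ENNReal.ofReal x ^ a ≤
      2 ^ a * A * (1 - 2 ^ (a - b))⁻¹ * ENNReal.ofReal y ^ (a - b) := by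
  have hcover : Ioi y ⊆ ⋃ n : ℕ, Ico (2 ^ n * y) (2 ^ (n + 1) * y) := fun x hx => by
    obtain ⟨n, h1, h2⟩ := exists_nat_pow_near ((one_le_div hy).2 (le_of_lt hx)) one_lt_two
    exact mem_iUnion.2 ⟨n, (le_div_iff₀ hy).1 h1, (div_lt_iff₀ hy).1 h2⟩
  have hpiece : ∀ n : ℕ, ∫⁻ x in Ico (2 ^ n * y) (2 ^ (n + 1) * y), V x * ENNReal.ofReal x ^ a ≤
      2 ^ a * A * ENNReal.ofReal y ^ (a - b) * (2 ^ (a - b)) ^ n := fun n => calc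
    _ ≤ ∫⁻ x in Ico (2 ^ n * y) (2 ^ (n + 1) * y), ENNReal.ofReal (2 ^ (n + 1) * y) ^ a * V x :=
        setLIntegral_mono' measurableSet_Ico fun x hx => by
          rw [mul_comm]
          gcongr
          exact hx.2.le
    _ ≤ ENNReal.ofReal (2 ^ (n + 1) * y) ^ a * ∫⁻ x in Ioi (2 ^ n * y), V x := by
        rw [lintegral_const_mul _ hV, setLIntegral_congr (Ioi_ae_eq_Ici (a := 2 ^ n * y))]
        gcongr
        exact Ico_subset_Ici_self
    _ ≤ ENNReal.ofReal (2 ^ (n + 1) * y) ^ a * (A * ENNReal.ofReal (2 ^ n * y) ^ (-b)) := by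
        gcongr
        exact hA _ (by positivity)
    _ = 2 ^ a * A * ENNReal.ofReal y ^ (a - b) * (2 ^ (a - b)) ^ n := by
        rw [ofReal_two_pow_mul_rpow, ofReal_two_pow_mul_rpow, sub_eq_add_neg,
          ENNReal.rpow_add _ _ two_ne_zero ENNReal.ofNat_ne_top,
          ENNReal.rpow_add _ _ (ENNReal.ofReal_pos.2 hy).ne' ENNReal.ofReal_ne_top]
        ring
  calc ∫⁻ x in Ioi y, V x * ENNReal.ofReal x ^ a
      ≤ ∑' n : ℕ, ∫⁻ x in Ico (2 ^ n * y) (2 ^ (n + 1) * y), V x * ENNReal.ofReal x ^ a :=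
        (lintegral_mono_set hcover).trans (lintegral_iUnion_le _ _)
    _ ≤ ∑' n : ℕ, 2 ^ a * A * ENNReal.ofReal y ^ (a - b) * (2 ^ (a - b)) ^ n :=
        ENNReal.tsum_le_tsum hpiece
    _ = 2 ^ a * A * (1 - 2 ^ (a - b))⁻¹ * ENNReal.ofReal y ^ (a - b) := by
        rw [ENNReal.tsum_mul_left, ENNReal.tsum_geometric]
        ring

section Hardy

variable {p q p' : ℝ} {f : ℝ → ℝ≥0∞} {x : ℝ}

theorem lintegral_Ioo_le_weighted_holder (hpc : p.HolderConjugate p') (hf : Measurable f)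
    (hx : 0 < x) :
    ∫⁻ y in Ioo (0:ℝ) x, f y ≤
      (∫⁻ y in Ioo (0:ℝ) x, f y ^ p * ENNReal.ofReal y ^ (p / (2 * p'))) ^ (1 / p) *
        (2 * ENNReal.ofReal x ^ (2⁻¹ : ℝ)) ^ (1 / p') := by
  have hw : Measurable fun y : ℝ => ENNReal.ofReal y ^ (1 / (2 * p')) := by fun_prop
  calc ∫⁻ y in Ioo (0:ℝ) x, f y
      = ∫⁻ y in Ioo (0:ℝ) x, (f y * ENNReal.ofReal y ^ (1 / (2 * p'))) *
          (ENNReal.ofReal y ^ (1 / (2 * p'))) ^ (-1 : ℝ) := by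
        refine setLIntegral_congr_fun measurableSet_Ioo fun y hy => ?_
        rw [mul_assoc, ← ENNReal.rpow_mul, mul_neg_one, ← ENNReal.rpow_add _ _
          (ENNReal.ofReal_pos.mpr hy.1).ne' ENNReal.ofReal_ne_top, add_neg_cancel,
          ENNReal.rpow_zero, mul_one]
    _ ≤ (∫⁻ y in Ioo (0:ℝ) x, (f y * ENNReal.ofReal y ^ (1 / (2 * p'))) ^ p) ^ (1 / p) *
          (∫⁻ y in Ioo (0:ℝ) x, ((ENNReal.ofReal y ^ (1 / (2 * p'))) ^ (-1 : ℝ)) ^ p') ^ (1 / p') :=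
        ENNReal.lintegral_mul_le_Lp_mul_Lq _ hpc (hf.mul hw).aemeasurable
          (hw.pow_const _).aemeasurable
    _ = _ := by
        have hp'0 : p' ≠ 0 := hpc.symm.ne_zero
        simp_rw [ENNReal.mul_rpow_of_nonneg _ _ hpc.nonneg, ← ENNReal.rpow_mul]
        rw [← lintegral_Ioo_rpow_neg_half hx]
        congr 3 <;> field_simp

theorem rpow_lintegral_Ioo_le (hpc : p.HolderConjugate p') (hpq : p ≤ q) (hf : Measurable f)
    (hx : 0 < x) :
    (∫⁻ y in Ioo (0:ℝ) x, f y) ^ q ≤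
      2 ^ (q / p') * (∫⁻ y in Ioi (0:ℝ), f y ^ p) ^ ((q - p) / p) *
        ENNReal.ofReal x ^ (q / p' - p / (2 * p')) *
        ∫⁻ y in Ioo (0:ℝ) x, f y ^ p * ENNReal.ofReal y ^ (p / (2 * p')) := by
  have hp0 := hpc.pos
  have hp'0 := hpc.symm.pos
  have hq0 : 0 < q := hp0.trans_le hpq
  have hqp : 0 ≤ (q - p) / p := div_nonneg (sub_nonneg.mpr hpq) hp0.le
  have hx0 : ENNReal.ofReal x ≠ 0 := (ENNReal.ofReal_pos.mpr hx).ne'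
  set s := p / (2 * p')
  set G := ∫⁻ y in Ioo (0:ℝ) x, f y ^ p * ENNReal.ofReal y ^ s
  set N := ∫⁻ y in Ioi (0:ℝ), f y ^ p
  have hG : G ≤ ENNReal.ofReal x ^ s * N := calc
    G ≤ ∫⁻ y in Ioo (0:ℝ) x, ENNReal.ofReal x ^ s * f y ^ p :=
        setLIntegral_mono' measurableSet_Ioo fun y hy => by
          rw [mul_comm]
          gcongr
          exact hy.2.le
    _ ≤ ENNReal.ofReal x ^ s * N := by
        rw [lintegral_const_mul _ (by fun_prop)]
        gcongr
        exact lintegral_mono_set Ioo_subset_Ioi_self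
  calc (∫⁻ y in Ioo (0:ℝ) x, f y) ^ q
      ≤ (G ^ (1 / p) * (2 * ENNReal.ofReal x ^ (2⁻¹ : ℝ)) ^ (1 / p')) ^ q := by
        gcongr
        exact lintegral_Ioo_le_weighted_holder hpc hf hx
    _ = 2 ^ (q / p') * ENNReal.ofReal x ^ (q / (2 * p')) * (G ^ ((q - p) / p) * G) := by
        have hGq : G ^ (1 / p * q) = G ^ ((q - p) / p) * G := by
          rw [show 1 / p * q = (q - p) / p + 1 by field_simp; ring,
            ENNReal.rpow_add_of_nonneg _ _ hqp zero_le_one, ENNReal.rpow_one]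
        rw [ENNReal.mul_rpow_of_nonneg _ _ hq0.le, ENNReal.mul_rpow_of_nonneg _ _ (by positivity),
          ENNReal.mul_rpow_of_nonneg _ _ hq0.le, ← ENNReal.rpow_mul, ← ENNReal.rpow_mul,
          ← ENNReal.rpow_mul, ← ENNReal.rpow_mul, hGq, show 1 / p' * q = q / p' by ring,
          show 2⁻¹ * (q / p') = q / (2 * p') by ring]
        ring
    _ ≤ 2 ^ (q / p') * ENNReal.ofReal x ^ (q / (2 * p')) *
          ((ENNReal.ofReal x ^ s * N) ^ ((q - p) / p) * G) := by
        gcongr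
    _ = _ := by
        rw [ENNReal.mul_rpow_of_nonneg _ _ hqp, ← ENNReal.rpow_mul,
          show q / p' - s = q / (2 * p') + s * ((q - p) / p) by simp only [s]; field_simp; ring,
          ENNReal.rpow_add _ _ hx0 ENNReal.ofReal_ne_top]
        ring

theorem lintegral_mul_lintegral_Ioo_rpow_le (hpc : p.HolderConjugate p') (hpq : p ≤ q)
    {k : ℝ → ℝ≥0∞} (hk : Measurable k) {A : ℝ≥0∞}
    (hA : ∀ z > 0, ∫⁻ t in Ioi z, k t ^ q ≤ A * ENNReal.ofReal z ^ (-(q / p')))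
    (hf : Measurable f) :
    ∫⁻ x in Ioi (0:ℝ), (k x * ∫⁻ y in Ioo (0:ℝ) x, f y) ^ q ≤
      2 ^ (q / p') * (2 ^ (q / p' - p / (2 * p')) * A * (1 - 2 ^ (-(p / (2 * p'))))⁻¹) *
        (∫⁻ y in Ioi (0:ℝ), f y ^ p) ^ (q / p) := by
  have hp0 := hpc.pos
  have hp'0 := hpc.symm.pos
  have hq0 : 0 < q := hp0.trans_le hpq
  set s := p / (2 * p')
  set a := q / p' - s
  set N := ∫⁻ y in Ioi (0:ℝ), f y ^ p
  set C := 2 ^ a * A * (1 - 2 ^ (-s))⁻¹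
  have ha : 0 ≤ a := by
    simp only [a, s]
    rw [sub_nonneg, div_le_div_iff₀ (by positivity) hp'0]
    nlinarith
  have hG : Measurable fun x => ∫⁻ y in Ioo (0:ℝ) x, f y ^ p * ENNReal.ofReal y ^ s :=
    Monotone.measurable fun x x' h => lintegral_mono_set (Ioo_subset_Ioo_right h)
  have htail : ∀ y > 0, ∫⁻ x in Ioi y, k x ^ q * ENNReal.ofReal x ^ a ≤
      C * ENNReal.ofReal y ^ (-s) := fun y hy => by
    have := setLIntegral_Ioi_mul_rpow_le ha (by fun_prop) hA hy
    rwa [show a - q / p' = -s by ring] at this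
  calc ∫⁻ x in Ioi (0:ℝ), (k x * ∫⁻ y in Ioo (0:ℝ) x, f y) ^ q
      ≤ ∫⁻ x in Ioi (0:ℝ), 2 ^ (q / p') * N ^ ((q - p) / p) * ((k x ^ q * ENNReal.ofReal x ^ a) *
          ∫⁻ y in Ioo (0:ℝ) x, f y ^ p * ENNReal.ofReal y ^ s) :=
        setLIntegral_mono' measurableSet_Ioi fun x hx => by
          rw [ENNReal.mul_rpow_of_nonneg _ _ hq0.le]
          calc k x ^ q * (∫⁻ y in Ioo (0:ℝ) x, f y) ^ q
              ≤ k x ^ q * (2 ^ (q / p') * N ^ ((q - p) / p) * ENNReal.ofReal x ^ a *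
                  ∫⁻ y in Ioo (0:ℝ) x, f y ^ p * ENNReal.ofReal y ^ s) :=
                by gcongr; exact rpow_lintegral_Ioo_le hpc hpq hf hx
            _ = _ := by ring
    _ = 2 ^ (q / p') * N ^ ((q - p) / p) * ∫⁻ y in Ioi (0:ℝ), (f y ^ p * ENNReal.ofReal y ^ s) *
          ∫⁻ x in Ioi y, k x ^ q * ENNReal.ofReal x ^ a := by
        rw [lintegral_const_mul _ (by fun_prop),
          lintegral_mul_lintegral_Ioo_swap (Φ := fun x => k x ^ q * ENNReal.ofReal x ^ a)
            (by fun_prop) (by fun_prop)]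
    _ ≤ 2 ^ (q / p') * N ^ ((q - p) / p) * ∫⁻ y in Ioi (0:ℝ), C * f y ^ p := by
        gcongr 2 ^ (q / p') * N ^ ((q - p) / p) * ?_
        refine setLIntegral_mono' measurableSet_Ioi fun y hy => ?_
        calc f y ^ p * ENNReal.ofReal y ^ s * ∫⁻ x in Ioi y, k x ^ q * ENNReal.ofReal x ^ a
            ≤ f y ^ p * ENNReal.ofReal y ^ s * (C * ENNReal.ofReal y ^ (-s)) := by
              gcongr; exact htail y hy
          _ = C * f y ^ p * (ENNReal.ofReal y ^ s * ENNReal.ofReal y ^ (-s)) := by ring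
          _ = C * f y ^ p := by
              rw [← ENNReal.rpow_add _ _ (ENNReal.ofReal_pos.2 hy).ne' ENNReal.ofReal_ne_top,
                add_neg_cancel, ENNReal.rpow_zero, mul_one]
    _ = 2 ^ (q / p') * C * N ^ (q / p) := by
        rw [lintegral_const_mul _ (by fun_prop), show q / p = (q - p) / p + 1 by field_simp; ring,
          ENNReal.rpow_add_of_nonneg _ _ (div_nonneg (by linarith) hp0.le) zero_le_one,
          ENNReal.rpow_one]
        ring

theorem exists_rpow_lintegral_mul_lintegral_Ioo_le (hpc : p.HolderConjugate p') (hpq : p ≤ q)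
    {k : ℝ → ℝ≥0∞} (hk : Measurable k) {A : ℝ≥0∞} (hAt : A ≠ ⊤)
    (hA : ∀ z > 0, ∫⁻ t in Ioi z, k t ^ q ≤ A * ENNReal.ofReal z ^ (-(q / p'))) :
    ∃ C ≠ ⊤, ∀ f : ℝ → ℝ≥0∞, Measurable f →
      (∫⁻ x in Ioi (0:ℝ), (k x * ∫⁻ y in Ioo (0:ℝ) x, f y) ^ q) ^ (1 / q) ≤
        C * (∫⁻ y in Ioi (0:ℝ), f y ^ p) ^ (1 / p) := by
  have hp0 := hpc.pos
  have hp'0 := hpc.symm.pos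
  have hq0 : 0 < q := hp0.trans_le hpq
  set D := 2 ^ (q / p') * (2 ^ (q / p' - p / (2 * p')) * A * (1 - 2 ^ (-(p / (2 * p'))))⁻¹)
  have hD : D ≠ ⊤ := by
    have : (2:ℝ≥0∞) ^ (-(p / (2 * p'))) < 1 :=
      ENNReal.rpow_lt_one_of_one_lt_of_neg ENNReal.one_lt_two (neg_lt_zero.2 (by positivity))
    have : (1 - (2:ℝ≥0∞) ^ (-(p / (2 * p'))))⁻¹ ≠ ⊤ :=
      ENNReal.inv_ne_top.2 (tsub_pos_of_lt this).ne'
    finiteness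
  refine ⟨D ^ (1 / q), by finiteness, fun f hf => ?_⟩
  calc (∫⁻ x in Ioi (0:ℝ), (k x * ∫⁻ y in Ioo (0:ℝ) x, f y) ^ q) ^ (1 / q)
      ≤ (D * (∫⁻ y in Ioi (0:ℝ), f y ^ p) ^ (q / p)) ^ (1 / q) := by
        gcongr
        exact lintegral_mul_lintegral_Ioo_rpow_le hpc hpq hk hA hf
    _ = D ^ (1 / q) * (∫⁻ y in Ioi (0:ℝ), f y ^ p) ^ (1 / p) := by
        rw [ENNReal.mul_rpow_of_nonneg _ _ (by positivity), ← ENNReal.rpow_mul,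
          show q / p * (1 / q) = 1 / p by field_simp]

end Hardy

theorem ENNReal.le_rpow_inv_mul_rpow_neg_inv {x K B : ℝ≥0∞} (hx0 : x ≠ 0) (hxt : x ≠ ⊤) {r : ℝ}
    (hr : 0 < r) (h : x * K ^ r ≤ B) : K ≤ B ^ r⁻¹ * x ^ (-r⁻¹) := calc
  K = (K ^ r) ^ r⁻¹ := (ENNReal.rpow_rpow_inv hr.ne' K).symm
  _ ≤ (B * x⁻¹) ^ r⁻¹ := by
      gcongr
      rwa [← div_eq_mul_inv, ENNReal.le_div_iff_mul_le (Or.inl hx0) (Or.inl hxt), mul_comm]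
  _ = B ^ r⁻¹ * x ^ (-r⁻¹) := by
      rw [ENNReal.mul_rpow_of_nonneg _ _ (inv_nonneg.2 hr.le), ENNReal.inv_rpow, ENNReal.rpow_neg]

theorem ENNReal.mul_rpow_le_rpow_of_mul_le_mul_rpow {p p' : ℝ} (hpc : p.HolderConjugate p')
    {x L c : ℝ≥0∞} (hx0 : x ≠ 0) (hxt : x ≠ ⊤) (h : x * L ≤ c * x ^ (1 / p)) :
    x * L ^ p' ≤ c ^ p' := by
  have hp'0 := hpc.symm.pos
  have hxp' : x ^ p' = x * x ^ (p' / p) := by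
    have : p' = 1 + p' / p := by
      have := hpc.inv_add_inv_eq_one
      field_simp at this ⊢
      linarith
    conv_lhs => rw [this]
    rw [ENNReal.rpow_add _ _ hx0 hxt, ENNReal.rpow_one]
  rw [← ENNReal.mul_le_mul_iff_left (c := x ^ (p' / p)) (ENNReal.rpow_pos (pos_iff_ne_zero.2 hx0)
    hxt).ne' (ENNReal.rpow_ne_top_of_nonneg (div_nonneg hp'0.le hpc.nonneg) hxt)]
  calc x * L ^ p' * x ^ (p' / p) = (x * L) ^ p' := by
        rw [ENNReal.mul_rpow_of_nonneg _ _ hp'0.le, hxp']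
        ring
    _ ≤ (c * x ^ (1 / p)) ^ p' := by gcongr
    _ = c ^ p' * x ^ (p' / p) := by
        rw [ENNReal.mul_rpow_of_nonneg _ _ hp'0.le, ← ENNReal.rpow_mul, one_div_mul_eq_div]

theorem ofReal_mul_lintegral_Ioi_rpow_le_of_hardy {p q : ℝ} (hp : 0 < p) (hq : 0 < q)
    {k : ℝ → ℝ≥0∞} {c : ℝ≥0∞}
    (hc : ∀ f : ℝ → ℝ≥0∞, Measurable f →
      (∫⁻ x in Ioi (0:ℝ), (k x * ∫⁻ y in Ioo (0:ℝ) x, f y) ^ q) ^ (1 / q) ≤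
        c * (∫⁻ y in Ioi (0:ℝ), f y ^ p) ^ (1 / p))
    {x : ℝ} (hx : 0 < x) :
    ENNReal.ofReal x * (∫⁻ y in Ioi x, k y ^ q) ^ (1 / q) ≤ c * ENNReal.ofReal x ^ (1 / p) := by
  set f : ℝ → ℝ≥0∞ := (Ioo 0 x).indicator 1
  have hf : ∀ S, MeasurableSet S → Ioo 0 x ⊆ S → ∫⁻ y in S, f y = ENNReal.ofReal x :=
    fun S hS hsub => by
      rw [lintegral_indicator_one measurableSet_Ioo, Measure.restrict_apply measurableSet_Ioo,
        inter_eq_left.2 hsub, Real.volume_Ioo, sub_zero]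
  have hfp : (fun y => f y ^ p) = f := funext fun y => by
    by_cases hy : y ∈ Ioo 0 x <;> simp [f, hy, hp]
  calc ENNReal.ofReal x * (∫⁻ y in Ioi x, k y ^ q) ^ (1 / q)
      = (∫⁻ t in Ioi x, k t ^ q * ENNReal.ofReal x ^ q) ^ (1 / q) := by
        rw [lintegral_mul_const' _ _ (ENNReal.rpow_ne_top_of_nonneg hq.le ENNReal.ofReal_ne_top),
          ENNReal.mul_rpow_of_nonneg _ _ (by positivity), ← ENNReal.rpow_mul,
          mul_one_div_cancel hq.ne', ENNReal.rpow_one, mul_comm]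
    _ = (∫⁻ t in Ioi x, (k t * ∫⁻ y in Ioo (0:ℝ) t, f y) ^ q) ^ (1 / q) := by
        congr 1
        refine setLIntegral_congr_fun measurableSet_Ioi fun t ht => ?_
        rw [hf _ measurableSet_Ioo (Ioo_subset_Ioo_right (le_of_lt ht)),
          ENNReal.mul_rpow_of_nonneg _ _ hq.le]
    _ ≤ (∫⁻ t in Ioi (0:ℝ), (k t * ∫⁻ y in Ioo (0:ℝ) t, f y) ^ q) ^ (1 / q) := by
        gcongr ?_ ^ _
        exact lintegral_mono_set (Ioi_subset_Ioi hx.le)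
    _ ≤ c * ENNReal.ofReal x ^ (1 / p) := by
        simpa only [hfp, hf _ measurableSet_Ioi Ioo_subset_Ioi_self] using
          hc f (measurable_one.indicator measurableSet_Ioo)

theorem statement12
    (p q p' : ℝ) (hp : 1 < p) (hpq : p ≤ q) (hp' : p' = p / (p - 1))
    (k : ℝ → ℝ≥0∞) (hkmeas : Measurable k) :
    (∃ c > 0, ∀ f : ℝ → ℝ≥0∞, Measurable f →
      (∫⁻ x in Ioi (0:ℝ), (k x * ∫⁻ y in Ioo (0:ℝ) x, f y) ^ q) ^ (1 / q) ≤
        ENNReal.ofReal c * (∫⁻ y in Ioi (0:ℝ), f y ^ p) ^ (1 / p)) ↔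
    (⨆ x ∈ Ioi (0:ℝ),
      ENNReal.ofReal x * (∫⁻ y in Ioi x, k y ^ q) ^ (p' / q)) < ⊤ := by
  have hpc : p.HolderConjugate p' := (Real.holderConjugate_iff_eq_conjExponent hp).2 hp'
  have hp'0 : 0 < p' := hpc.symm.pos
  have hq : 0 < q := hpc.pos.trans_le hpq
  constructor
  · rintro ⟨c, -, hc⟩
    refine lt_of_le_of_lt (iSup₂_le fun x (hx : 0 < x) => ?_)
      (ENNReal.rpow_lt_top_of_nonneg hp'0.le (ENNReal.ofReal_ne_top (r := c)))
    rw [show p' / q = 1 / q * p' by ring, ENNReal.rpow_mul]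
    exact ENNReal.mul_rpow_le_rpow_of_mul_le_mul_rpow hpc (ENNReal.ofReal_pos.2 hx).ne'
      ENNReal.ofReal_ne_top (ofReal_mul_lintegral_Ioi_rpow_le_of_hardy hpc.pos hq hc hx)
  · intro hB
    set B := ⨆ x ∈ Ioi (0:ℝ), ENNReal.ofReal x * (∫⁻ y in Ioi x, k y ^ q) ^ (p' / q)
    have hA : ∀ z > 0, ∫⁻ t in Ioi z, k t ^ q ≤ B ^ (q / p') * ENNReal.ofReal z ^ (-(q / p')) :=
      fun z hz => by
        simpa only [inv_div] using ENNReal.le_rpow_inv_mul_rpow_neg_inv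
          (ENNReal.ofReal_pos.2 hz).ne' ENNReal.ofReal_ne_top (div_pos hp'0 hq)
          (le_iSup₂ (f := fun x (_ : x ∈ Ioi (0:ℝ)) =>
            ENNReal.ofReal x * (∫⁻ y in Ioi x, k y ^ q) ^ (p' / q)) z hz)
    obtain ⟨C, hCt, hC⟩ := exists_rpow_lintegral_mul_lintegral_Ioo_le hpc hpq hkmeas
      (ENNReal.rpow_ne_top_of_nonneg (by positivity) hB.ne) hA
    refine ⟨C.toReal + 1, by positivity, fun f hf => (hC f hf).trans ?_⟩
    gcongr
    rw [ENNReal.le_ofReal_iff_toReal_le hCt (by positivity)]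
    linarith

end
end

section
/- Fix 1 < p ≤ q < ∞, p' = p/(p-1), and let k ∈ M_+(ℝ_+). Then there is a constant c > 0 such that [ ∫_{ℝ_+} ( ∫_x^∞ k(y) f(y) dy )^q dx ]^{1/q} ≤ c [ ∫_{ℝ_+} f(y)^p dy ]^{1/p} for all f ∈ M_+(ℝ_+), if and only if sup_{x>0} x ( ∫_x^∞ k(y)^{p'} dy )^{q/p'} < ∞. -/
open MeasureTheory Set
open scoped ENNReal

noncomputable section

/-!
Write `T f x = ∫_x^∞ k f` and `B` for the supremum.

Necessity: testing the inequality on `f = φ ^ (1/p)` restricted to `(x, ∞)`, where `φ ≤ k ^ p'`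
has finite integral there, gives `T f ≥ ∫_x^∞ φ` on `(0, x]` and hence
`x ^ (1/q) * (∫_x^∞ φ) ^ (1/p') ≤ c`; bounded, compactly supported truncations of `k ^ p'` and
monotone convergence give `x * (∫_x^∞ k ^ p') ^ (q/p') ≤ c ^ q`.

Sufficiency: cut `(0, ∞)` into the dyadic intervals `I_j = (2^j, 2^(j+1)]`. By Hölder on each
interval, `T f ≤ ∑_{n ≥ 0} a_{j+n} d_{j+n}` on `I_j`, where `a_i = ‖k‖_{L^p'(I_i)}` and
`d_i = ‖f‖_{L^p(I_i)}`, while the hypothesis gives `2^i a_i^q ≤ B`. So `∫ (T f)^q` is at most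
`B` times the `q`-th power of the `ℓ^q` norm of the convolution of `d` with the geometric kernel
`2^(-n/q)`; Young's inequality and `ℓ^p ⊆ ℓ^q` (as `p ≤ q`) bound that norm by `‖d‖_p`, and
`‖d‖_p^p = ∫ f^p`.
-/

open Filter Topology

namespace ENNReal

theorem tsum_rpow_le_rpow_tsum {ι : Type*} {r : ℝ} (hr : 1 ≤ r) (c : ι → ℝ≥0∞) :
    ∑' i, c i ^ r ≤ (∑' i, c i) ^ r := by
  have hsplit : ∀ a : ℝ≥0∞, a ^ r = a * a ^ (r - 1) := fun a => by
    conv_rhs => enter [1]; rw [← rpow_one a]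
    rw [← rpow_add_of_nonneg _ _ zero_le_one (sub_nonneg.2 hr), add_sub_cancel]
  calc ∑' i, c i ^ r = ∑' i, c i * c i ^ (r - 1) := by simp only [hsplit]
    _ ≤ ∑' i, c i * (∑' j, c j) ^ (r - 1) := by
      gcongr with i
      exact ENNReal.le_tsum i
    _ = (∑' i, c i) ^ r := by rw [ENNReal.tsum_mul_right, ← hsplit]

theorem inner_le_Lp_mul_Lq_tsum {ι : Type*} [Countable ι] {p q : ℝ} (hpq : p.HolderConjugate q)
    (f g : ι → ℝ≥0∞) :
    ∑' i, f i * g i ≤ (∑' i, f i ^ p) ^ (1 / p) * (∑' i, g i ^ q) ^ (1 / q) := by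
  let _ : MeasurableSpace ι := ⊤
  have : DiscreteMeasurableSpace ι := ⟨fun _ => trivial⟩
  simpa [lintegral_count] using lintegral_mul_le_Lp_mul_Lq Measure.count hpq
    (measurable_of_countable f).aemeasurable (measurable_of_countable g).aemeasurable

theorem tsum_tsum_nat_add_rpow_le {q : ℝ} (hq : 1 < q) (w : ℕ → ℝ≥0∞) (d : ℤ → ℝ≥0∞) :
    ∑' j : ℤ, (∑' n : ℕ, w n * d (j + n)) ^ q ≤ (∑' n, w n) ^ q * ∑' j, d j ^ q := by
  have hq' : q.HolderConjugate q.conjExponent := .conjExponent hq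
  set q' := q.conjExponent
  have hq0 : 0 < q := hq'.pos
  have hpow_inv : ∀ (a : ℝ≥0∞) (r : ℝ), r ≠ 0 → (a ^ (1 / r)) ^ r = a := fun a r hr => by
    rw [← rpow_mul, one_div_mul_cancel hr, rpow_one]
  have hpoint : ∀ j : ℤ, (∑' n : ℕ, w n * d (j + n)) ^ q ≤
      (∑' n, w n) ^ (q / q') * ∑' n : ℕ, w n * d (j + n) ^ q := by
    intro j
    have hw : ∀ n, w n * d (j + n) = w n ^ (1 / q') * (w n ^ (1 / q) * d (j + n)) := fun n => by
      rw [← mul_assoc, ← rpow_add_of_nonneg _ _ (one_div_nonneg.2 hq'.symm.nonneg)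
        (one_div_nonneg.2 hq0.le),
        one_div, one_div, hq'.symm.inv_add_inv_eq_one, rpow_one]
    have hHolder := inner_le_Lp_mul_Lq_tsum hq'.symm (fun n => w n ^ (1 / q'))
      (fun n => w n ^ (1 / q) * d (j + n))
    simp only [hpow_inv _ _ hq'.symm.ne_zero, mul_rpow_of_nonneg _ _ hq0.le,
      hpow_inv _ _ hq0.ne'] at hHolder
    calc (∑' n : ℕ, w n * d (j + n)) ^ q
        ≤ ((∑' n, w n) ^ (1 / q') * (∑' n, w n * d (j + n) ^ q) ^ (1 / q)) ^ q := by
          simp only [hw]; gcongr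
      _ = (∑' n, w n) ^ (q / q') * ∑' n : ℕ, w n * d (j + n) ^ q := by
          rw [mul_rpow_of_nonneg _ _ hq0.le, hpow_inv _ _ hq0.ne', ← rpow_mul, one_div_mul_eq_div]
  have hshift : ∀ n : ℕ, ∑' j : ℤ, d (j + n) ^ q = ∑' j, d j ^ q := fun n =>
    (Equiv.addRight (n : ℤ)).tsum_eq (fun j => d j ^ q)
  calc ∑' j : ℤ, (∑' n : ℕ, w n * d (j + n)) ^ q
      ≤ ∑' j : ℤ, (∑' n, w n) ^ (q / q') * ∑' n : ℕ, w n * d (j + n) ^ q :=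
        ENNReal.tsum_le_tsum hpoint
    _ = (∑' n, w n) ^ (q / q') * ((∑' n, w n) * ∑' j, d j ^ q) := by
        rw [ENNReal.tsum_mul_left, ENNReal.tsum_comm]
        simp only [ENNReal.tsum_mul_left, hshift, ENNReal.tsum_mul_right]
    _ = (∑' n, w n) ^ q * ∑' j, d j ^ q := by
        rw [← mul_assoc]
        congr 1
        conv_lhs => enter [2]; rw [← rpow_one (∑' n, w n)]
        rw [← rpow_add_of_nonneg _ _ (div_nonneg hq0.le hq'.symm.nonneg) zero_le_one,
          hq'.div_conj_eq_sub_one, sub_add_cancel]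

theorem tsum_mul_tsum_nat_add_rpow_le {p q : ℝ} (hp : 0 < p) (hpq : p ≤ q) (hq : 1 < q)
    {t a d : ℤ → ℝ≥0∞} {B : ℝ≥0∞} (ht : ∀ (j : ℤ) (n : ℕ), t (j + n) = 2 ^ n * t j)
    (hB : ∀ i, t i * a i ^ q ≤ B) :
    ∑' j, t j * (∑' n : ℕ, a (j + n) * d (j + n)) ^ q ≤
      B * (∑' n : ℕ, ((2 : ℝ≥0∞) ^ (1 / q))⁻¹ ^ n) ^ q * (∑' j, d j ^ p) ^ (q / p) := by
  set ρ : ℝ≥0∞ := 2 ^ (1 / q)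
  have hq0 : 0 < q := hp.trans_le hpq
  have hpow_inv : ∀ a : ℝ≥0∞, (a ^ (1 / q)) ^ q = a := fun a => by
    rw [← rpow_mul, one_div_mul_cancel hq0.ne', rpow_one]
  have hρ : ∀ n : ℕ, ρ ^ n ≠ 0 ∧ ρ ^ n ≠ ⊤ := fun n =>
    ⟨pow_ne_zero _ (by positivity), pow_ne_top (rpow_ne_top_of_nonneg (by positivity) ofNat_ne_top)⟩
  have hcoef : ∀ j (n : ℕ), t j ^ (1 / q) * a (j + n) ≤ B ^ (1 / q) * ρ⁻¹ ^ n := by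
    intro j n
    have : ρ ^ n * (t j ^ (1 / q) * a (j + n)) = (t (j + n) * a (j + n) ^ q) ^ (1 / q) := by
      rw [ht, mul_rpow_of_nonneg _ _ (by positivity), mul_rpow_of_nonneg _ _ (by positivity),
        ← rpow_mul (a _), mul_one_div_cancel hq0.ne', rpow_one, ← rpow_natCast, ← rpow_mul,
        ← rpow_natCast (2 : ℝ≥0∞), ← rpow_mul, mul_comm (1 / q), mul_assoc]
    rw [← ENNReal.inv_pow, ← div_eq_mul_inv,
      ENNReal.le_div_iff_mul_le (Or.inl (hρ n).1) (Or.inl (hρ n).2), mul_comm, this]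
    exact rpow_le_rpow (hB _) (by positivity)
  have hpoint : ∀ j, t j * (∑' n : ℕ, a (j + n) * d (j + n)) ^ q ≤
      B * (∑' n : ℕ, ρ⁻¹ ^ n * d (j + n)) ^ q := by
    intro j
    calc t j * (∑' n : ℕ, a (j + n) * d (j + n)) ^ q
        = (∑' n : ℕ, t j ^ (1 / q) * a (j + n) * d (j + n)) ^ q := by
          simp only [mul_assoc, ENNReal.tsum_mul_left]
          rw [mul_rpow_of_nonneg _ _ hq0.le, hpow_inv]
      _ ≤ (∑' n : ℕ, B ^ (1 / q) * ρ⁻¹ ^ n * d (j + n)) ^ q := by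
          gcongr (∑' n : ℕ, ?_ * _) ^ _ with n
          exact hcoef j n
      _ = B * (∑' n : ℕ, ρ⁻¹ ^ n * d (j + n)) ^ q := by
          simp only [mul_assoc, ENNReal.tsum_mul_left]
          rw [mul_rpow_of_nonneg _ _ hq0.le, hpow_inv]
  calc ∑' j, t j * (∑' n : ℕ, a (j + n) * d (j + n)) ^ q
      ≤ ∑' j, B * (∑' n : ℕ, ρ⁻¹ ^ n * d (j + n)) ^ q := ENNReal.tsum_le_tsum hpoint
    _ ≤ B * ((∑' n : ℕ, ρ⁻¹ ^ n) ^ q * ∑' j, d j ^ q) := by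
        rw [ENNReal.tsum_mul_left]
        gcongr
        exact tsum_tsum_nat_add_rpow_le hq _ d
    _ ≤ B * ((∑' n : ℕ, ρ⁻¹ ^ n) ^ q * (∑' j, d j ^ p) ^ (q / p)) := by
        gcongr
        calc ∑' j, d j ^ q = ∑' j, (d j ^ p) ^ (q / p) := by
              simp only [← rpow_mul, mul_div_cancel₀ _ hp.ne']
          _ ≤ (∑' j, d j ^ p) ^ (q / p) := tsum_rpow_le_rpow_tsum ((one_le_div hp).2 hpq) _
    _ = _ := by rw [mul_assoc]

theorem tsum_inv_rpow_two_pow_ne_top {r : ℝ} (hr : 0 < r) :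
    ∑' n : ℕ, ((2 : ℝ≥0∞) ^ r)⁻¹ ^ n ≠ ⊤ := by
  rw [ENNReal.tsum_geometric, Ne, ENNReal.inv_eq_top, tsub_eq_zero_iff_le, not_le,
    ENNReal.inv_lt_one]
  exact one_lt_rpow one_lt_two hr

theorem mul_rpow_le_of_mul_le_mul_rpow {p p' : ℝ} (hpp' : p.HolderConjugate p') {A y C : ℝ≥0∞}
    (hA : A ≠ ⊤) (h : y * A ≤ C * A ^ (1 / p)) : y * A ^ (1 / p') ≤ C := by
  rcases eq_or_ne A 0 with rfl | hA0
  · rw [zero_rpow_of_pos (one_div_pos.2 hpp'.symm.pos), mul_zero]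
    exact zero_le
  have hsplit : y * A ^ (1 / p') * A ^ (1 / p) ≤ C * A ^ (1 / p) := by
    rwa [mul_assoc, ← rpow_add _ _ hA0 hA, hpp'.symm.one_div_add_one_div,
      one_div_one, rpow_one]
  exact (ENNReal.mul_le_mul_iff_left (by simp [hA0, hA]) (by simp [hA0, hA])).1 hsplit

end ENNReal

def dyadicIoc (j : ℤ) : Set ℝ := Ioc (2 ^ j) (2 ^ (j + 1))

theorem measurableSet_dyadicIoc (j : ℤ) : MeasurableSet (dyadicIoc j) := measurableSet_Ioc

theorem pairwise_disjoint_dyadicIoc : Pairwise (Function.onFun Disjoint dyadicIoc) := by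
  unfold dyadicIoc
  simpa only [Order.succ_eq_add_one] using
    (zpow_right_mono₀ (one_le_two (α := ℝ))).pairwise_disjoint_on_Ioc_succ (α := ℤ)

theorem iUnion_dyadicIoc : ⋃ j, dyadicIoc j = Ioi 0 := by
  ext x
  simp only [mem_iUnion, mem_Ioi]
  exact ⟨fun ⟨j, hj⟩ => (zpow_pos two_pos j).trans hj.1,
    fun hx => exists_mem_Ioc_zpow hx one_lt_two⟩

theorem Ioi_zpow_subset_iUnion_dyadicIoc (j : ℤ) :
    Ioi ((2 : ℝ) ^ j) ⊆ ⋃ n : ℕ, dyadicIoc (j + n) := by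
  intro y hy
  obtain ⟨i, hi⟩ := exists_mem_Ioc_zpow ((zpow_pos two_pos j).trans (mem_Ioi.1 hy)) one_lt_two
  have hji : j ≤ i := by
    have := (zpow_lt_zpow_iff_right₀ one_lt_two).1 (lt_of_lt_of_le hy hi.2)
    omega
  refine mem_iUnion.2 ⟨(i - j).toNat, ?_⟩
  rwa [Int.toNat_of_nonneg (sub_nonneg.2 hji), add_sub_cancel]

theorem volume_dyadicIoc (j : ℤ) : volume (dyadicIoc j) = ENNReal.ofReal (2 ^ j) := by
  rw [dyadicIoc, Real.volume_Ioc, zpow_add_one₀ two_ne_zero]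
  ring_nf

section Hardy

variable {p q p' : ℝ} {k : ℝ → ℝ≥0∞}

theorem lintegral_tail_rpow_le (hpp' : p.HolderConjugate p') (hpq : p ≤ q) (hk : Measurable k)
    {f : ℝ → ℝ≥0∞} (hf : Measurable f) :
    ∫⁻ x in Ioi 0, (∫⁻ y in Ioi x, k y * f y) ^ q ≤
      (⨆ x ∈ Ioi (0 : ℝ), ENNReal.ofReal x * (∫⁻ y in Ioi x, k y ^ p') ^ (q / p')) *
        (∑' n : ℕ, ((2 : ℝ≥0∞) ^ (1 / q))⁻¹ ^ n) ^ q * (∫⁻ y in Ioi 0, f y ^ p) ^ (q / p) := by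
  set B := ⨆ x ∈ Ioi (0 : ℝ), ENNReal.ofReal x * (∫⁻ y in Ioi x, k y ^ p') ^ (q / p')
  set a : ℤ → ℝ≥0∞ := fun i => (∫⁻ y in dyadicIoc i, k y ^ p') ^ (1 / p')
  set d : ℤ → ℝ≥0∞ := fun i => (∫⁻ y in dyadicIoc i, f y ^ p) ^ (1 / p)
  have hp : 0 < p := hpp'.pos
  have hq : 1 < q := hpp'.lt.trans_le hpq
  have htail : ∀ j, ∀ x ∈ dyadicIoc j,
      ∫⁻ y in Ioi x, k y * f y ≤ ∑' n : ℕ, a (j + n) * d (j + n) := fun j x hx =>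
    calc ∫⁻ y in Ioi x, k y * f y
        ≤ ∫⁻ y in ⋃ n : ℕ, dyadicIoc (j + n), k y * f y :=
          lintegral_mono_set ((Ioi_subset_Ioi hx.1.le).trans (Ioi_zpow_subset_iUnion_dyadicIoc j))
      _ ≤ ∑' n : ℕ, ∫⁻ y in dyadicIoc (j + n), k y * f y := lintegral_iUnion_le _ _
      _ ≤ ∑' n : ℕ, a (j + n) * d (j + n) := ENNReal.tsum_le_tsum fun n =>
          ENNReal.lintegral_mul_le_Lp_mul_Lq _ hpp'.symm hk.aemeasurable hf.aemeasurable
  have hB : ∀ i : ℤ, ENNReal.ofReal (2 ^ i) * a i ^ q ≤ B := fun i =>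
    calc ENNReal.ofReal (2 ^ i) * a i ^ q
        = ENNReal.ofReal (2 ^ i) * (∫⁻ y in dyadicIoc i, k y ^ p') ^ (q / p') := by
          rw [← ENNReal.rpow_mul, one_div_mul_eq_div]
      _ ≤ ENNReal.ofReal (2 ^ i) * (∫⁻ y in Ioi (2 ^ i), k y ^ p') ^ (q / p') := by
          gcongr
          · exact (div_pos (by linarith) hpp'.symm.pos).le
          · exact fun y hy => hy.1
      _ ≤ B := le_iSup₂_of_le (2 ^ i : ℝ) (mem_Ioi.2 (zpow_pos two_pos i)) le_rfl
  have hgeom : ∀ (j : ℤ) (n : ℕ),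
      ENNReal.ofReal (2 ^ (j + n)) = 2 ^ n * ENNReal.ofReal (2 ^ j) := fun j n => by
    rw [zpow_add₀ two_ne_zero, zpow_natCast, mul_comm, ENNReal.ofReal_mul (by positivity),
      ENNReal.ofReal_pow zero_le_two, ENNReal.ofReal_ofNat]
  have hd : ∑' j, d j ^ p = ∫⁻ y in Ioi 0, f y ^ p := by
    simp only [d, ← ENNReal.rpow_mul, one_div_mul_cancel hp.ne', ENNReal.rpow_one]
    rw [← iUnion_dyadicIoc,
      lintegral_iUnion measurableSet_dyadicIoc pairwise_disjoint_dyadicIoc]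
  calc ∫⁻ x in Ioi 0, (∫⁻ y in Ioi x, k y * f y) ^ q
      = ∑' j, ∫⁻ x in dyadicIoc j, (∫⁻ y in Ioi x, k y * f y) ^ q := by
        rw [← iUnion_dyadicIoc,
          lintegral_iUnion measurableSet_dyadicIoc pairwise_disjoint_dyadicIoc]
    _ ≤ ∑' j, ENNReal.ofReal (2 ^ j) * (∑' n : ℕ, a (j + n) * d (j + n)) ^ q :=
        ENNReal.tsum_le_tsum fun j =>
        calc ∫⁻ x in dyadicIoc j, (∫⁻ y in Ioi x, k y * f y) ^ q
            ≤ ∫⁻ _ in dyadicIoc j, (∑' n : ℕ, a (j + n) * d (j + n)) ^ q :=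
              setLIntegral_mono' measurableSet_Ioc fun x hx =>
                ENNReal.rpow_le_rpow (htail j x hx) (by positivity)
          _ = _ := by rw [setLIntegral_const, volume_dyadicIoc, mul_comm]
    _ ≤ B * (∑' n : ℕ, ((2 : ℝ≥0∞) ^ (1 / q))⁻¹ ^ n) ^ q * (∑' j, d j ^ p) ^ (q / p) :=
        ENNReal.tsum_mul_tsum_nat_add_rpow_le hp hpq hq hgeom hB
    _ = _ := by rw [hd]

theorem ofReal_mul_rpow_le_of_hardy_of_le (hpp' : p.HolderConjugate p') (hq : 0 < q)
    {C : ℝ≥0∞} (hC : ∀ f : ℝ → ℝ≥0∞, Measurable f →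
      (∫⁻ x in Ioi (0 : ℝ), (∫⁻ y in Ioi x, k y * f y) ^ q) ^ (1 / q) ≤
        C * (∫⁻ y in Ioi (0 : ℝ), f y ^ p) ^ (1 / p))
    {x : ℝ} (hx : 0 < x) {φ : ℝ → ℝ≥0∞} (hφ : Measurable φ) (hφk : ∀ y, φ y ≤ k y ^ p')
    (hφx : ∫⁻ y in Ioi x, φ y ≠ ⊤) :
    ENNReal.ofReal x * (∫⁻ y in Ioi x, φ y) ^ (q / p') ≤ C ^ q := by
  set A := ∫⁻ y in Ioi x, φ y
  set f : ℝ → ℝ≥0∞ := (Ioi x).indicator fun y => φ y ^ (1 / p)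
  have hp : 0 < p := hpp'.pos
  have hf : Measurable f := (hφ.pow_const _).indicator measurableSet_Ioi
  have hfp : ∫⁻ y in Ioi 0, f y ^ p = A := by
    have : ∀ y, f y ^ p = (Ioi x).indicator φ y := fun y => by
      by_cases hy : y ∈ Ioi x
      · simp [f, hy, ← ENNReal.rpow_mul, inv_mul_cancel₀ hp.ne']
      · simp [f, hy, ENNReal.zero_rpow_of_pos hp]
    simp_rw [this]
    rw [lintegral_indicator measurableSet_Ioi, Measure.restrict_restrict measurableSet_Ioi,
      inter_eq_left.2 (Ioi_subset_Ioi hx.le)]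
  have hkf : ∀ t ≤ x, A ≤ ∫⁻ y in Ioi t, k y * f y := fun t ht =>
    calc A ≤ ∫⁻ y in Ioi x, k y * f y := setLIntegral_mono' measurableSet_Ioi fun y hy => by
          calc φ y = φ y ^ (1 / p') * φ y ^ (1 / p) := by
                rw [← ENNReal.rpow_add_of_nonneg _ _ (one_div_nonneg.2 hpp'.symm.nonneg)
                  (one_div_nonneg.2 hp.le), hpp'.symm.one_div_add_one_div, one_div_one,
                  ENNReal.rpow_one]
            _ ≤ k y * f y := by
                simp only [f, Set.indicator_of_mem hy]
                gcongr
                calc φ y ^ (1 / p') ≤ (k y ^ p') ^ (1 / p') :=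
                    ENNReal.rpow_le_rpow (hφk y) (one_div_nonneg.2 hpp'.symm.nonneg)
                  _ = k y := by rw [← ENNReal.rpow_mul, mul_one_div_cancel hpp'.symm.ne_zero,
                    ENNReal.rpow_one]
      _ ≤ ∫⁻ y in Ioi t, k y * f y := lintegral_mono_set (Ioi_subset_Ioi ht)
  have hlow : ENNReal.ofReal x * A ^ q ≤
      ∫⁻ t in Ioi 0, (∫⁻ y in Ioi t, k y * f y) ^ q :=
    calc ENNReal.ofReal x * A ^ q = ∫⁻ _ in Ioc 0 x, A ^ q := by
          rw [setLIntegral_const, Real.volume_Ioc, sub_zero, mul_comm]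
      _ ≤ ∫⁻ t in Ioc 0 x, (∫⁻ y in Ioi t, k y * f y) ^ q :=
          setLIntegral_mono' measurableSet_Ioc fun t ht =>
            ENNReal.rpow_le_rpow (hkf t ht.2) hq.le
      _ ≤ _ := lintegral_mono_set Ioc_subset_Ioi_self
  have htest : ENNReal.ofReal x ^ (1 / q) * A ≤ C * A ^ (1 / p) :=
    calc ENNReal.ofReal x ^ (1 / q) * A = (ENNReal.ofReal x * A ^ q) ^ (1 / q) := by
          rw [ENNReal.mul_rpow_of_nonneg _ _ (by positivity), ← ENNReal.rpow_mul,
            mul_one_div_cancel hq.ne', ENNReal.rpow_one]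
      _ ≤ (∫⁻ t in Ioi 0, (∫⁻ y in Ioi t, k y * f y) ^ q) ^ (1 / q) :=
          ENNReal.rpow_le_rpow hlow (by positivity)
      _ ≤ C * A ^ (1 / p) := hfp ▸ hC f hf
  calc ENNReal.ofReal x * A ^ (q / p') = (ENNReal.ofReal x ^ (1 / q) * A ^ (1 / p')) ^ q := by
        rw [ENNReal.mul_rpow_of_nonneg _ _ hq.le, ← ENNReal.rpow_mul, ← ENNReal.rpow_mul,
          one_div_mul_cancel hq.ne', ENNReal.rpow_one, one_div_mul_eq_div]
    _ ≤ C ^ q := ENNReal.rpow_le_rpow (ENNReal.mul_rpow_le_of_mul_le_mul_rpow hpp' hφx htest) hq.le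

theorem ofReal_mul_rpow_le_of_hardy (hpp' : p.HolderConjugate p') (hq : 0 < q)
    (hk : Measurable k) {C : ℝ≥0∞} (hC : ∀ f : ℝ → ℝ≥0∞, Measurable f →
      (∫⁻ x in Ioi (0 : ℝ), (∫⁻ y in Ioi x, k y * f y) ^ q) ^ (1 / q) ≤
        C * (∫⁻ y in Ioi (0 : ℝ), f y ^ p) ^ (1 / p))
    {x : ℝ} (hx : 0 < x) :
    ENNReal.ofReal x * (∫⁻ y in Ioi x, k y ^ p') ^ (q / p') ≤ C ^ q := by
  set φ : ℕ → ℝ → ℝ≥0∞ := fun n => (Iic (x + n)).indicator fun y => min (k y ^ p') n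
  have hφ : ∀ n, Measurable (φ n) := fun n =>
    ((hk.pow_const _).min measurable_const).indicator measurableSet_Iic
  have hφk : ∀ n y, φ n y ≤ k y ^ p' := fun n y =>
    (indicator_le_self _ _ y).trans (min_le_left _ _)
  have hφx : ∀ n : ℕ, ∫⁻ y in Ioi x, φ n y ≠ ⊤ := fun n => by
    have hle : ∀ y, φ n y ≤ (Iic (x + n)).indicator (fun _ => (n : ℝ≥0∞)) y := fun y =>
      indicator_le_indicator (min_le_right _ _)
    refine ne_top_of_le_ne_top ?_ (lintegral_mono hle)
    rw [lintegral_indicator_const measurableSet_Iic, Measure.restrict_apply measurableSet_Iic,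
      Iic_inter_Ioi, Real.volume_Ioc]
    exact ENNReal.mul_ne_top (ENNReal.natCast_ne_top n) ENNReal.ofReal_ne_top
  have hmono : ∀ y, Monotone fun n => φ n y := fun y m n hmn => by
    have hmn' : (m : ℝ) ≤ n := Nat.cast_le.2 hmn
    by_cases hy : y ≤ x + m
    · simp only [φ, mem_Iic, hy, (hy.trans (by linarith) : y ≤ x + n), indicator_of_mem]
      gcongr
    · simp [φ, hy]
  have hlim : ∀ y, Tendsto (fun n => φ n y) atTop (𝓝 (k y ^ p')) := fun y => by
    obtain ⟨N, hN⟩ := exists_nat_ge (y - x)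
    have hev : (fun n : ℕ => min (k y ^ p') n) =ᶠ[atTop] fun n => φ n y := by
      filter_upwards [eventually_ge_atTop N] with n hn
      have : y ≤ x + n := by linarith [(Nat.cast_le (α := ℝ)).2 hn]
      simp [φ, this]
    simpa using (tendsto_const_nhds.min ENNReal.tendsto_nat_nhds_top).congr' hev
  have hA := lintegral_tendsto_of_tendsto_of_monotone (μ := volume.restrict (Ioi x))
    (fun n => (hφ n).aemeasurable) (ae_of_all _ hmono) (ae_of_all _ hlim)
  have hcont : Continuous fun A : ℝ≥0∞ => ENNReal.ofReal x * A ^ (q / p') :=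
    (ENNReal.continuous_const_mul ENNReal.ofReal_ne_top).comp ENNReal.continuous_rpow_const
  exact le_of_tendsto' ((hcont.tendsto _).comp hA) fun n =>
    ofReal_mul_rpow_le_of_hardy_of_le hpp' hq hC hx (hφ n) (hφk n) (hφx n)

end Hardy

theorem statement13
    (p q p' : ℝ) (hp : 1 < p) (hpq : p ≤ q) (hp' : p' = p / (p - 1))
    (k : ℝ → ℝ≥0∞) (hkmeas : Measurable k) :
    (∃ c > 0, ∀ f : ℝ → ℝ≥0∞, Measurable f →
      (∫⁻ x in Ioi (0:ℝ), (∫⁻ y in Ioi x, k y * f y) ^ q) ^ (1 / q) ≤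
        ENNReal.ofReal c * (∫⁻ y in Ioi (0:ℝ), f y ^ p) ^ (1 / p)) ↔
    (⨆ x ∈ Ioi (0:ℝ),
      ENNReal.ofReal x * (∫⁻ y in Ioi x, k y ^ p') ^ (q / p')) < ⊤ := by
  have hpp' : p.HolderConjugate p' := (Real.holderConjugate_iff_eq_conjExponent hp).2 hp'
  have hq : 0 < q := by linarith
  constructor
  · rintro ⟨c, -, hc⟩
    exact (iSup₂_le fun x (hx : 0 < x) => ofReal_mul_rpow_le_of_hardy hpp' hq hkmeas hc hx).trans_lt
      (ENNReal.rpow_lt_top_of_nonneg hq.le ENNReal.ofReal_ne_top)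
  · intro hB
    set K := (⨆ x ∈ Ioi (0:ℝ), ENNReal.ofReal x * (∫⁻ y in Ioi x, k y ^ p') ^ (q / p')) *
      (∑' n : ℕ, ((2 : ℝ≥0∞) ^ (1 / q))⁻¹ ^ n) ^ q
    have hK : K ^ (1 / q) ≠ ⊤ := ENNReal.rpow_ne_top_of_nonneg (by positivity) <|
      ENNReal.mul_ne_top hB.ne <| ENNReal.rpow_ne_top_of_nonneg hq.le <|
        ENNReal.tsum_inv_rpow_two_pow_ne_top (by positivity)
    refine ⟨(K ^ (1 / q)).toReal + 1, by positivity, fun f hf => ?_⟩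
    calc (∫⁻ x in Ioi 0, (∫⁻ y in Ioi x, k y * f y) ^ q) ^ (1 / q)
        ≤ (K * (∫⁻ y in Ioi 0, f y ^ p) ^ (q / p)) ^ (1 / q) :=
          ENNReal.rpow_le_rpow (lintegral_tail_rpow_le hpp' hpq hkmeas hf) (by positivity)
      _ = K ^ (1 / q) * (∫⁻ y in Ioi 0, f y ^ p) ^ (1 / p) := by
          rw [ENNReal.mul_rpow_of_nonneg _ _ (by positivity), ← ENNReal.rpow_mul,
            show q / p * (1 / q) = 1 / p by field_simp]
      _ ≤ ENNReal.ofReal ((K ^ (1 / q)).toReal + 1) * (∫⁻ y in Ioi 0, f y ^ p) ^ (1 / p) := by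
          gcongr
          exact (ENNReal.ofReal_toReal hK).ge.trans (ENNReal.ofReal_le_ofReal (by linarith))

end
end

section
/- Fix 1 < p ≤ q < ∞, p' = p/(p-1), and λ with max(1/p', 1/q) < λ < 1, and set K(x,y) = (x² + y²)^{-λ/2}. Then there is a constant c > 0 with [ ∫_{ℝ_+} (T_K f)(x)^q dx ]^{1/q} ≤ c [ ∫_{ℝ_+} f(y)^p dy ]^{1/p} for all f ∈ M_+(ℝ_+), if and only if 1/q = λ − 1/p'. -/
/-!
Necessity: on the indicator of `(r, 2r)` the kernel is at least `8 ^ (-λ/2) r ^ (-λ)`, so the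
inequality gives `r ^ (1 - λ + 1/q) ≲ r ^ (1/p)` for every `r > 0`, which forces the exponents
to agree.

Sufficiency: Hölder's inequality with the power weights `y ^ (± s/p')` bounds `(T_K f)(x) ^ q` by
`x ^ (-m)` times the `q/p`-th power of a positive integral operator applied to `f ^ p`. As
`q/p ≥ 1`, Jensen's inequality and Tonelli show that this operator maps `L¹` to
`L^{q/p}(x ^ (-m) dx)` once its kernel columns are uniformly bounded there. Both this column bound
and the Hölder step come down to `∫₀^∞ (x² + y²)^(-λ/2) y^(-s) dy ≲ x^(1-λ-s)` for
`s < 1 < λ + s` (split at `y = x`); the relation `1/q = λ - 1/p'` is exactly what makes the column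
bound independent of `y`.
-/

open MeasureTheory Set
open scoped ENNReal

noncomputable section

theorem lintegral_Ioc_zero_ofReal_rpow {t x : ℝ} (ht : -1 < t) (hx : 0 < x) :
    ∫⁻ y in Ioc 0 x, ENNReal.ofReal (y ^ t) = ENNReal.ofReal (x ^ (t + 1) / (t + 1)) := by
  have hint : IntegrableOn (fun y : ℝ => y ^ t) (Ioc 0 x) := by
    rw [← intervalIntegrable_iff_integrableOn_Ioc_of_le hx.le]
    exact intervalIntegral.intervalIntegrable_rpow' ht
  rw [← ofReal_integral_eq_lintegral_ofReal hint
    (ae_restrict_of_forall_mem measurableSet_Ioc fun y hy => Real.rpow_nonneg hy.1.le _),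
    ← intervalIntegral.integral_of_le hx.le, integral_rpow (Or.inl ht),
    Real.zero_rpow (by linarith), sub_zero]

theorem lintegral_Ioi_ofReal_rpow_neg {s x : ℝ} (hs : 1 < s) (hx : 0 < x) :
    ∫⁻ y in Ioi x, ENNReal.ofReal (y ^ (-s)) = ENNReal.ofReal (x ^ (1 - s) / (s - 1)) := by
  rw [← ofReal_integral_eq_lintegral_ofReal (integrableOn_Ioi_rpow_of_lt (by linarith) hx)
    (ae_restrict_of_forall_mem measurableSet_Ioi fun y hy => Real.rpow_nonneg (hx.trans hy).le _),
    integral_Ioi_rpow_of_lt (by linarith) hx, neg_add_eq_sub, neg_div, ← div_neg, neg_sub]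

theorem eq_zero_of_forall_rpow_le {δ C : ℝ} (h : ∀ r : ℝ, 0 < r → r ^ δ ≤ C) : δ = 0 := by
  by_contra hδ
  have hC : 1 ≤ C := by simpa using h 1 one_pos
  have hlarge := h ((C + 1) ^ (1 / δ)) (by positivity)
  rw [← Real.rpow_mul (by positivity), one_div_mul_cancel hδ, Real.rpow_one] at hlarge
  linarith

section MeanInequalities

variable {α β : Type*} [MeasurableSpace α] [MeasurableSpace β]

theorem lintegral_mul_le_weighted_Lp_mul_Lq (μ : Measure α) {p q : ℝ} (hpq : p.HolderConjugate q)
    {k f u v : α → ℝ≥0∞} (hk : Measurable k) (hf : Measurable f) (hu : Measurable u)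
    (hv : Measurable v) (huv : ∀ᵐ y ∂μ, u y * v y = 1) :
    ∫⁻ y, k y * f y ∂μ ≤
      (∫⁻ y, k y * u y ^ p * f y ^ p ∂μ) ^ (1 / p) * (∫⁻ y, k y * v y ^ q ∂μ) ^ (1 / q) := by
  have hsplit : ∀ᵐ y ∂μ, k y * f y = ((fun y => k y ^ (1 / p) * u y * f y) *
      fun y => k y ^ (1 / q) * v y) y := by
    filter_upwards [huv] with y hy
    calc k y * f y = k y ^ (1 / p + 1 / q) * (u y * v y) * f y := by
          rw [hy, one_div, one_div, hpq.inv_add_inv_eq_one, ENNReal.rpow_one, mul_one]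
      _ = _ := by
          rw [ENNReal.rpow_add_of_nonneg _ _ (by simp [hpq.nonneg]) (by simp [hpq.symm.nonneg]),
            Pi.mul_apply]
          ring
  have hpow : ∀ {s : ℝ}, 0 < s → ∀ y, (k y ^ (1 / s)) ^ s = k y := fun hs y => by
    rw [← ENNReal.rpow_mul, one_div_mul_cancel hs.ne', ENNReal.rpow_one]
  rw [lintegral_congr_ae hsplit]
  refine (ENNReal.lintegral_mul_le_Lp_mul_Lq μ hpq (by fun_prop) (by fun_prop)).trans_eq ?_
  simp only [ENNReal.mul_rpow_of_nonneg _ _ hpq.nonneg,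
    ENNReal.mul_rpow_of_nonneg _ _ hpq.symm.nonneg, hpow hpq.pos, hpow hpq.symm.pos]

theorem rpow_lintegral_mul_le_lintegral_rpow_mul_mul (μ : Measure α) {r : ℝ}
    (hr : 1 ≤ r) {h g : α → ℝ≥0∞} (hh : Measurable h) (hg : Measurable g) :
    (∫⁻ y, h y * g y ∂μ) ^ r ≤ (∫⁻ y, h y ^ r * g y ∂μ) * (∫⁻ y, g y ∂μ) ^ (r - 1) := by
  have hr0 : 0 < r := by linarith
  have hs : 0 ≤ 1 / r := by positivity
  have hs' : 0 ≤ 1 - 1 / r := by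
    rw [sub_nonneg, div_le_one hr0]; exact hr
  have hjensen := ENNReal.lintegral_mul_norm_pow_le (μ := μ) (f := fun y => h y ^ r * g y)
    (by fun_prop) hg.aemeasurable hs hs' (add_sub_cancel _ _)
  have hcongr : ∀ y, (h y ^ r * g y) ^ (1 / r) * g y ^ (1 - 1 / r) = h y * g y := fun y => by
    rw [ENNReal.mul_rpow_of_nonneg _ _ hs, ← ENNReal.rpow_mul, mul_one_div_cancel hr0.ne',
      ENNReal.rpow_one, mul_assoc, ← ENNReal.rpow_add_of_nonneg _ _ hs hs', add_sub_cancel,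
      ENNReal.rpow_one]
  simp only [hcongr] at hjensen
  calc (∫⁻ y, h y * g y ∂μ) ^ r
      ≤ ((∫⁻ y, h y ^ r * g y ∂μ) ^ (1 / r) * (∫⁻ y, g y ∂μ) ^ (1 - 1 / r)) ^ r :=
        ENNReal.rpow_le_rpow hjensen hr0.le
    _ = _ := by
        rw [ENNReal.mul_rpow_of_nonneg _ _ hr0.le, ← ENNReal.rpow_mul, ← ENNReal.rpow_mul,
          one_div_mul_cancel hr0.ne', ENNReal.rpow_one, sub_mul, one_div_mul_cancel hr0.ne',
          one_mul]

theorem lintegral_weighted_rpow_lintegral_mul_le (μ : Measure α) (ν : Measure β) [SFinite μ]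
    [SFinite ν] {r : ℝ} (hr : 1 ≤ r) {w : α → ℝ≥0∞} {h : α → β → ℝ≥0∞} {g : β → ℝ≥0∞}
    (hw : Measurable w) (hh : Measurable (Function.uncurry h)) (hg : Measurable g) {C : ℝ≥0∞}
    (hC : ∀ᵐ y ∂ν, ∫⁻ x, w x * h x y ^ r ∂μ ≤ C) :
    ∫⁻ x, w x * (∫⁻ y, h x y * g y ∂ν) ^ r ∂μ ≤ C * (∫⁻ y, g y ∂ν) ^ r := by
  have hF : Measurable fun z : α × β => w z.1 * (h z.1 z.2 ^ r * g z.2) :=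
    (hw.comp measurable_fst).mul ((hh.pow_const r).mul (hg.comp measurable_snd))
  have hswap : ∫⁻ x, w x * ∫⁻ y, h x y ^ r * g y ∂ν ∂μ =
      ∫⁻ y, g y * ∫⁻ x, w x * h x y ^ r ∂μ ∂ν := by
    calc ∫⁻ x, w x * ∫⁻ y, h x y ^ r * g y ∂ν ∂μ
        = ∫⁻ x, ∫⁻ y, w x * (h x y ^ r * g y) ∂ν ∂μ := by
          refine lintegral_congr fun x => ?_
          exact (lintegral_const_mul _ (((hh.comp measurable_prodMk_left).pow_const r).mul hg)).symm
      _ = ∫⁻ y, ∫⁻ x, w x * (h x y ^ r * g y) ∂μ ∂ν := lintegral_lintegral_swap hF.aemeasurable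
      _ = _ := by
          refine lintegral_congr fun y => ?_
          rw [mul_comm, ← lintegral_mul_const (g y) (f := fun x => w x * h x y ^ r)
            (hw.mul ((hh.comp measurable_prodMk_right).pow_const r))]
          simp only [mul_assoc]
  calc ∫⁻ x, w x * (∫⁻ y, h x y * g y ∂ν) ^ r ∂μ
      ≤ ∫⁻ x, w x * (∫⁻ y, h x y ^ r * g y ∂ν) * (∫⁻ y, g y ∂ν) ^ (r - 1) ∂μ :=
        lintegral_mono fun x => by
          rw [mul_assoc]
          exact mul_le_mul_right (rpow_lintegral_mul_le_lintegral_rpow_mul_mul ν hr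
            (hh.comp measurable_prodMk_left) hg) _
    _ = (∫⁻ y, g y * ∫⁻ x, w x * h x y ^ r ∂μ ∂ν) * (∫⁻ y, g y ∂ν) ^ (r - 1) := by
        rw [lintegral_mul_const'' _ (by fun_prop), hswap]
    _ ≤ (∫⁻ y, g y * C ∂ν) * (∫⁻ y, g y ∂ν) ^ (r - 1) := by
        gcongr ?_ * _
        exact lintegral_mono_ae (hC.mono fun y hy => mul_le_mul_right hy _)
    _ = C * (∫⁻ y, g y ∂ν) ^ r := by
        rw [lintegral_mul_const _ hg, mul_comm _ C, mul_assoc]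
        conv_rhs => rw [← add_sub_cancel 1 r, ENNReal.rpow_add_of_nonneg _ _ zero_le_one
          (sub_nonneg.2 hr), ENNReal.rpow_one]

end MeanInequalities

def radialKernel (lam x y : ℝ) : ℝ≥0∞ := ENNReal.ofReal ((x ^ 2 + y ^ 2) ^ (-(lam / 2)))

section radialKernel

variable {lam x y : ℝ}

theorem radialKernel_comm : radialKernel lam x y = radialKernel lam y x := by
  rw [radialKernel, radialKernel, add_comm]

theorem measurable_radialKernel : Measurable (Function.uncurry (radialKernel lam)) := by
  unfold radialKernel; fun_prop

theorem radialKernel_rpow {r : ℝ} (hr : 0 ≤ r) :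
    radialKernel lam x y ^ r = radialKernel (lam * r) x y := by
  rw [radialKernel, radialKernel, ENNReal.ofReal_rpow_of_nonneg (by positivity) hr,
    ← Real.rpow_mul (by positivity)]
  ring_nf

theorem ofReal_rpow_le_radialKernel (hlam : 0 ≤ lam) {t : ℝ} (hxy : 0 < x ^ 2 + y ^ 2)
    (ht : x ^ 2 + y ^ 2 ≤ t) : ENNReal.ofReal (t ^ (-(lam / 2))) ≤ radialKernel lam x y :=
  ENNReal.ofReal_le_ofReal (Real.rpow_le_rpow_of_nonpos hxy ht (by linarith))

theorem radialKernel_le_rpow (hlam : 0 ≤ lam) (hx : 0 < x) :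
    radialKernel lam x y ≤ ENNReal.ofReal (x ^ (-lam)) := by
  refine ENNReal.ofReal_le_ofReal ((Real.rpow_le_rpow_of_nonpos (by positivity)
    (le_add_of_nonneg_right (sq_nonneg y)) (by linarith)).trans_eq ?_)
  rw [← Real.rpow_natCast, ← Real.rpow_mul hx.le]
  ring_nf

theorem lintegral_radialKernel_mul_rpow_le (hlam : 0 ≤ lam) {s : ℝ} (hs : s < 1)
    (hlams : 1 < lam + s) (hx : 0 < x) :
    ∫⁻ y in Ioi 0, radialKernel lam x y * ENNReal.ofReal (y ^ (-s)) ≤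
      ENNReal.ofReal (1 / (1 - s) + 1 / (lam + s - 1)) * ENNReal.ofReal (x ^ (1 - lam - s)) := by
  have hnear : ∫⁻ y in Ioc 0 x, radialKernel lam x y * ENNReal.ofReal (y ^ (-s)) ≤
      ENNReal.ofReal (1 / (1 - s)) * ENNReal.ofReal (x ^ (1 - lam - s)) :=
    calc ∫⁻ y in Ioc 0 x, radialKernel lam x y * ENNReal.ofReal (y ^ (-s))
        ≤ ∫⁻ y in Ioc 0 x, ENNReal.ofReal (x ^ (-lam)) * ENNReal.ofReal (y ^ (-s)) :=
          lintegral_mono fun y => mul_le_mul_left (radialKernel_le_rpow hlam hx) _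
      _ = _ := by
          rw [lintegral_const_mul' _ _ ENNReal.ofReal_ne_top,
            lintegral_Ioc_zero_ofReal_rpow (by linarith) hx]
          have h1s : 0 < 1 - s := by linarith
          rw [← ENNReal.ofReal_mul (by positivity), ← ENNReal.ofReal_mul (by positivity),
            mul_div_assoc', ← Real.rpow_add hx]
          ring_nf
  have hfar : ∫⁻ y in Ioi x, radialKernel lam x y * ENNReal.ofReal (y ^ (-s)) ≤
      ENNReal.ofReal (1 / (lam + s - 1)) * ENNReal.ofReal (x ^ (1 - lam - s)) :=
    calc ∫⁻ y in Ioi x, radialKernel lam x y * ENNReal.ofReal (y ^ (-s))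
        ≤ ∫⁻ y in Ioi x, ENNReal.ofReal (y ^ (-(lam + s))) :=
          setLIntegral_mono' measurableSet_Ioi fun y hy => by
            have hy0 : 0 < y := hx.trans hy
            rw [neg_add, Real.rpow_add hy0, ENNReal.ofReal_mul (by positivity), radialKernel_comm]
            exact mul_le_mul_left (radialKernel_le_rpow hlam hy0) _
      _ = _ := by
          rw [lintegral_Ioi_ofReal_rpow_neg hlams hx, ← ENNReal.ofReal_mul (by positivity),
            sub_sub, one_div_mul_eq_div]
  rw [← Ioc_union_Ioi_eq_Ioi hx.le, lintegral_union measurableSet_Ioi (Ioc_disjoint_Ioi le_rfl),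
    ENNReal.ofReal_add (by positivity) (by positivity), add_mul]
  exact add_le_add hnear hfar

end radialKernel

def IsTKBounded (K : ℝ → ℝ → ℝ≥0∞) (p q : ℝ) : Prop :=
  ∃ c > 0, ∀ f : ℝ → ℝ≥0∞, Measurable f →
    (∫⁻ x in Ioi (0:ℝ), TK K f x ^ q) ^ (1 / q) ≤
      ENNReal.ofReal c * (∫⁻ y in Ioi (0:ℝ), f y ^ p) ^ (1 / p)

section necessity

variable {lam r : ℝ}

theorem volume_Ioo_two_mul (r : ℝ) : volume (Ioo r (2 * r)) = ENNReal.ofReal r := by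
  rw [Real.volume_Ioo]; ring_nf

theorem lintegral_indicator_Ioo_rpow {p : ℝ} (hp : 0 < p) (hr : 0 < r) :
    ∫⁻ y in Ioi 0, (Ioo r (2 * r)).indicator 1 y ^ p = ENNReal.ofReal r := by
  have hpow : ∀ y, (Ioo r (2 * r)).indicator (1 : ℝ → ℝ≥0∞) y ^ p = (Ioo r (2 * r)).indicator 1 y :=
    fun y => by by_cases hy : y ∈ Ioo r (2 * r) <;> simp [hy, hp]
  rw [lintegral_congr hpow, lintegral_indicator_one measurableSet_Ioo,
    Measure.restrict_apply measurableSet_Ioo,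
    inter_eq_left.2 (Ioo_subset_Ioi_self.trans (Ioi_subset_Ioi hr.le)), volume_Ioo_two_mul]

theorem ofReal_le_TK_radialKernel_indicator (hlam : 0 ≤ lam) (hr : 0 < r) {x : ℝ}
    (hx : x ∈ Ioo r (2 * r)) :
    ENNReal.ofReal (8 ^ (-(lam / 2)) * r ^ (1 - lam)) ≤
      TK (radialKernel lam) ((Ioo r (2 * r)).indicator 1) x := by
  have hTK : TK (radialKernel lam) ((Ioo r (2 * r)).indicator 1) x =
      ∫⁻ y in Ioo r (2 * r), radialKernel lam x y := by
    calc TK (radialKernel lam) ((Ioo r (2 * r)).indicator 1) x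
        = ∫⁻ y in Ioi 0, (Ioo r (2 * r)).indicator (radialKernel lam x) y :=
          lintegral_congr fun y => by by_cases hy : y ∈ Ioo r (2 * r) <;> simp [hy]
      _ = _ := by
          rw [lintegral_indicator measurableSet_Ioo, Measure.restrict_restrict measurableSet_Ioo,
            inter_eq_left.2 (Ioo_subset_Ioi_self.trans (Ioi_subset_Ioi hr.le))]
  have hconst : 8 ^ (-(lam / 2)) * r ^ (1 - lam) = (8 * r ^ 2) ^ (-(lam / 2)) * r := by
    rw [Real.mul_rpow (by norm_num) (by positivity), ← Real.rpow_natCast, ← Real.rpow_mul hr.le,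
      mul_assoc, ← Real.rpow_add_one hr.ne']
    ring_nf
  rw [hTK, hconst, ENNReal.ofReal_mul (by positivity), ← volume_Ioo_two_mul r, ← setLIntegral_const]
  refine setLIntegral_mono' measurableSet_Ioo fun y hy => ofReal_rpow_le_radialKernel hlam
    (by nlinarith [hx.1, hy.1]) (by nlinarith [hx.1, hx.2, hy.1, hy.2])

theorem ofReal_le_lintegral_TK_radialKernel_indicator_rpow (hlam : 0 ≤ lam) (hr : 0 < r) {q : ℝ}
    (hq : 0 < q) :
    ENNReal.ofReal (8 ^ (-(lam / 2)) * r ^ (1 - lam) * r ^ (1 / q)) ≤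
      (∫⁻ x in Ioi 0, TK (radialKernel lam) ((Ioo r (2 * r)).indicator 1) x ^ q) ^ (1 / q) := by
  calc ENNReal.ofReal (8 ^ (-(lam / 2)) * r ^ (1 - lam) * r ^ (1 / q))
      = (∫⁻ _ in Ioo r (2 * r), ENNReal.ofReal (8 ^ (-(lam / 2)) * r ^ (1 - lam)) ^ q) ^
          (1 / q) := by
        rw [setLIntegral_const, volume_Ioo_two_mul, ENNReal.mul_rpow_of_nonneg _ _ (by positivity),
          ← ENNReal.rpow_mul, mul_one_div_cancel hq.ne', ENNReal.rpow_one,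
          ENNReal.ofReal_rpow_of_pos hr, ENNReal.ofReal_mul (by positivity)]
    _ ≤ (∫⁻ x in Ioo r (2 * r), TK (radialKernel lam) ((Ioo r (2 * r)).indicator 1) x ^ q) ^
          (1 / q) := by
        gcongr ?_ ^ _
        exact setLIntegral_mono' measurableSet_Ioo fun x hx =>
          ENNReal.rpow_le_rpow (ofReal_le_TK_radialKernel_indicator hlam hr hx) hq.le
    _ ≤ _ := by
        gcongr
        exact Ioo_subset_Ioi_self.trans (Ioi_subset_Ioi hr.le)

theorem eq_of_isTKBounded_radialKernel {p q : ℝ} (hp : 0 < p) (hq : 0 < q) (hlam : 0 ≤ lam)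
    (h : IsTKBounded (radialKernel lam) p q) : 1 / q = lam - 1 + 1 / p := by
  obtain ⟨c, hc, hbound⟩ := h
  suffices hpow : ∀ r : ℝ, 0 < r → r ^ (1 - lam + 1 / q - 1 / p) ≤ c / 8 ^ (-(lam / 2)) by
    linarith [eq_zero_of_forall_rpow_le hpow]
  intro r hr
  have h := (ofReal_le_lintegral_TK_radialKernel_indicator_rpow hlam hr hq).trans
    (hbound _ (measurable_one.indicator measurableSet_Ioo))
  rw [lintegral_indicator_Ioo_rpow hp hr, ENNReal.ofReal_rpow_of_pos hr,
    ← ENNReal.ofReal_mul hc.le, ENNReal.ofReal_le_ofReal_iff (by positivity)] at h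
  rw [le_div_iff₀ (by positivity), ← mul_le_mul_iff_left₀ (Real.rpow_pos_of_pos hr (1 / p))]
  calc _ = 8 ^ (-(lam / 2)) * r ^ (1 - lam) * r ^ (1 / q) := by
        rw [mul_comm _ (8 ^ _), mul_assoc, mul_assoc, ← Real.rpow_add hr, ← Real.rpow_add hr]
        ring_nf
    _ ≤ _ := h

end necessity

section sufficiency

theorem TK_radialKernel_rpow_le {p p' q lam s x : ℝ} (hpp' : p.HolderConjugate p') (hq : 0 ≤ q)
    (hlam : 0 ≤ lam) (hs : s < 1) (hlams : 1 < lam + s) (hx : 0 < x) {f : ℝ → ℝ≥0∞}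
    (hf : Measurable f) :
    TK (radialKernel lam) f x ^ q ≤
      ENNReal.ofReal (1 / (1 - s) + 1 / (lam + s - 1)) ^ (q / p') *
        (ENNReal.ofReal (x ^ ((1 - lam - s) * (q / p'))) *
          (∫⁻ y in Ioi 0, radialKernel lam x y * ENNReal.ofReal (y ^ (s / p' * p)) * f y ^ p) ^
            (q / p)) := by
  have hweight : ∀ {a t y : ℝ}, 0 < y → 0 ≤ t →
      ENNReal.ofReal (y ^ a) ^ t = ENNReal.ofReal (y ^ (a * t)) := fun hy ht => by
    rw [ENNReal.ofReal_rpow_of_nonneg (Real.rpow_nonneg hy.le _) ht, ← Real.rpow_mul hy.le]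
  have huv : ∀ᵐ y ∂volume.restrict (Ioi (0:ℝ)),
      ENNReal.ofReal (y ^ (s / p')) * ENNReal.ofReal (y ^ (-(s / p'))) = 1 := by
    filter_upwards [ae_restrict_mem measurableSet_Ioi] with y hy
    rw [← ENNReal.ofReal_mul (Real.rpow_nonneg (le_of_lt hy) _), ← Real.rpow_add hy,
      add_neg_cancel, Real.rpow_zero, ENNReal.ofReal_one]
  have hholder := lintegral_mul_le_weighted_Lp_mul_Lq _ hpp'
    (by unfold radialKernel; fun_prop : Measurable (radialKernel lam x)) hf
    (by fun_prop) (by fun_prop) huv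
  have hu : ∫⁻ y in Ioi 0, radialKernel lam x y * ENNReal.ofReal (y ^ (s / p')) ^ p * f y ^ p =
      ∫⁻ y in Ioi 0, radialKernel lam x y * ENNReal.ofReal (y ^ (s / p' * p)) * f y ^ p :=
    setLIntegral_congr_fun measurableSet_Ioi fun y hy => by rw [hweight hy hpp'.nonneg]
  have hv : ∫⁻ y in Ioi 0, radialKernel lam x y * ENNReal.ofReal (y ^ (-(s / p'))) ^ p' =
      ∫⁻ y in Ioi 0, radialKernel lam x y * ENNReal.ofReal (y ^ (-s)) :=
    setLIntegral_congr_fun measurableSet_Ioi fun y hy => by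
      rw [hweight hy hpp'.symm.nonneg, neg_mul, div_mul_cancel₀ _ hpp'.symm.ne_zero]
  rw [hu, hv] at hholder
  refine (ENNReal.rpow_le_rpow (hholder.trans (mul_le_mul_right (ENNReal.rpow_le_rpow
    (lintegral_radialKernel_mul_rpow_le hlam hs hlams hx) (by simp [hpp'.symm.nonneg])) _))
    hq).trans_eq ?_
  rw [ENNReal.mul_rpow_of_nonneg _ _ hq, ← ENNReal.rpow_mul, ← ENNReal.rpow_mul,
    ENNReal.mul_rpow_of_nonneg _ _ (mul_nonneg (by simp [hpp'.symm.nonneg]) hq),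
    ENNReal.ofReal_rpow_of_pos (Real.rpow_pos_of_pos hx _), ← Real.rpow_mul hx.le,
    one_div_mul_eq_div, one_div_mul_eq_div]
  ring

theorem lintegral_rpow_mul_radialKernel_mul_rpow_le {lam m r b y : ℝ} (hlam : 0 ≤ lam) (hr : 0 ≤ r)
    (hm : m < 1) (hlamm : 1 < lam * r + m) (hb : b * r = lam * r + m - 1) (hy : 0 < y) :
    ∫⁻ x in Ioi 0, ENNReal.ofReal (x ^ (-m)) * (radialKernel lam x y * ENNReal.ofReal (y ^ b)) ^ r ≤
      ENNReal.ofReal (1 / (1 - m) + 1 / (lam * r + m - 1)) := by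
  calc _
      = ENNReal.ofReal (y ^ (b * r)) *
          ∫⁻ x in Ioi 0, radialKernel (lam * r) y x * ENNReal.ofReal (x ^ (-m)) := by
        rw [← lintegral_const_mul' _ _ ENNReal.ofReal_ne_top]
        refine lintegral_congr fun x => ?_
        rw [ENNReal.mul_rpow_of_nonneg _ _ hr, radialKernel_rpow hr, radialKernel_comm,
          ENNReal.ofReal_rpow_of_nonneg (Real.rpow_nonneg hy.le _) hr, ← Real.rpow_mul hy.le]
        ring
    _ ≤ ENNReal.ofReal (y ^ (b * r)) * (ENNReal.ofReal (1 / (1 - m) + 1 / (lam * r + m - 1)) *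
          ENNReal.ofReal (y ^ (1 - lam * r - m))) := by
        gcongr
        exact lintegral_radialKernel_mul_rpow_le (mul_nonneg hlam hr) hm hlamm hy
    _ = _ := by
        rw [mul_left_comm, ← ENNReal.ofReal_mul (Real.rpow_nonneg hy.le _), ← Real.rpow_add hy, hb]
        ring_nf
        rw [Real.rpow_zero, ENNReal.ofReal_one, mul_one]

theorem exists_lintegral_TK_radialKernel_rpow_le {p p' q lam s : ℝ} (hpp' : p.HolderConjugate p')
    (hpq : p ≤ q) (hE : 1 / q = lam - 1 / p') (hs₀ : 0 < s) (hs₁ : s < 1) (hlams : 1 < lam + s)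
    (hm₁ : (lam + s - 1) * (q / p') < 1) :
    ∃ C > 0, ∀ f : ℝ → ℝ≥0∞, Measurable f →
      ∫⁻ x in Ioi 0, TK (radialKernel lam) f x ^ q ≤
        ENNReal.ofReal C * (∫⁻ y in Ioi 0, f y ^ p) ^ (q / p) := by
  have hp : 0 < p := hpp'.pos
  have hp' : 0 < p' := hpp'.symm.pos
  have hq : 0 < q := hp.trans_le hpq
  have hlam : 0 < lam := by linarith [one_div_pos.2 hq, one_div_pos.2 hp']
  set m := (lam + s - 1) * (q / p') with hm
  set r := q / p with hr
  have hcol : s / p' * p * r = lam * r + m - 1 := by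
    have hinv : 1 / p + 1 / p' = 1 := by rw [one_div, one_div]; exact hpp'.inv_add_inv_eq_one
    rw [hm, hr, show lam = 1 / q + 1 / p' by linarith]
    field_simp at hinv ⊢
    linear_combination (-q - p') * hinv
  have hlamm : 1 < lam * r + m := by
    have : 0 < s / p' * p * r := by positivity
    linarith
  set CA := 1 / (1 - s) + 1 / (lam + s - 1)
  set CB := 1 / (1 - m) + 1 / (lam * r + m - 1)
  have hCA0 : 0 < CA := add_pos (one_div_pos.2 (by linarith)) (one_div_pos.2 (by linarith))
  have hCB0 : 0 < CB := add_pos (one_div_pos.2 (by linarith)) (one_div_pos.2 (by linarith))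
  refine ⟨CA ^ (q / p') * CB, by positivity, fun f hf => ?_⟩
  set G : ℝ → ℝ≥0∞ := fun x =>
    ∫⁻ y in Ioi 0, radialKernel lam x y * ENNReal.ofReal (y ^ (s / p' * p)) * f y ^ p
  have hpoint : ∀ x ∈ Ioi (0 : ℝ), TK (radialKernel lam) f x ^ q ≤
      ENNReal.ofReal CA ^ (q / p') * (ENNReal.ofReal (x ^ (-m)) * G x ^ r) := fun x hx => by
    have h := TK_radialKernel_rpow_le hpp' hq.le hlam.le hs₁ hlams hx hf
    rwa [show (1 - lam - s) * (q / p') = -m by ring] at h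
  have hweighted : ∫⁻ x in Ioi 0, ENNReal.ofReal (x ^ (-m)) * G x ^ r ≤
      ENNReal.ofReal CB * (∫⁻ y in Ioi 0, f y ^ p) ^ r :=
    lintegral_weighted_rpow_lintegral_mul_le _ _ ((one_le_div hp).2 hpq) (by fun_prop)
      (measurable_radialKernel.mul (by fun_prop)) (hf.pow_const p)
      ((ae_restrict_mem measurableSet_Ioi).mono fun y hy =>
        lintegral_rpow_mul_radialKernel_mul_rpow_le hlam.le (by positivity) hm₁ hlamm hcol hy)
  calc ∫⁻ x in Ioi 0, TK (radialKernel lam) f x ^ q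
      ≤ ∫⁻ x in Ioi 0, ENNReal.ofReal CA ^ (q / p') * (ENNReal.ofReal (x ^ (-m)) * G x ^ r) :=
        setLIntegral_mono' measurableSet_Ioi hpoint
    _ ≤ ENNReal.ofReal CA ^ (q / p') * (ENNReal.ofReal CB * (∫⁻ y in Ioi 0, f y ^ p) ^ r) := by
        rw [lintegral_const_mul' _ _
          (ENNReal.rpow_ne_top_of_nonneg (by positivity) ENNReal.ofReal_ne_top)]
        gcongr
    _ = _ := by
        rw [ENNReal.ofReal_mul (by positivity), ENNReal.ofReal_rpow_of_pos hCA0, mul_assoc]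

theorem isTKBounded_radialKernel {p p' q lam : ℝ} (hpp' : p.HolderConjugate p') (hpq : p ≤ q)
    (hE : 1 / q = lam - 1 / p') : IsTKBounded (radialKernel lam) p q := by
  have hp : 0 < p := hpp'.pos
  have hp' : 0 < p' := hpp'.symm.pos
  have hq : 0 < q := hp.trans_le hpq
  have hlam₀ : 0 < lam := by linarith [one_div_pos.2 hq, one_div_pos.2 hp']
  have hlam₁ : lam ≤ 1 := by
    have hinv : 1 / p + 1 / p' = 1 := by rw [one_div, one_div]; exact hpp'.inv_add_inv_eq_one
    linarith [one_div_le_one_div_of_le hp hpq]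
  -- `ε < λ` gives `s = 1 - λ + ε < 1`, and `ε < p'/q` gives `m = ε q/p' < 1`
  set ε := min lam (p' / q) / 2 with hε
  have hε₀ : 0 < ε := by positivity
  have hεm : ε * (q / p') < 1 :=
    calc ε * (q / p') < p' / q * (q / p') := by gcongr; linarith [min_le_right lam (p' / q)]
      _ = 1 := by field_simp
  obtain ⟨C, hC, hbound⟩ := exists_lintegral_TK_radialKernel_rpow_le (s := 1 - lam + ε) hpp' hpq hE
    (by linarith) (by linarith [min_le_left lam (p' / q)]) (by linarith)
    (by rwa [show lam + (1 - lam + ε) - 1 = ε by ring])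
  refine ⟨C ^ (1 / q), by positivity, fun f hf => ?_⟩
  calc (∫⁻ x in Ioi 0, TK (radialKernel lam) f x ^ q) ^ (1 / q)
      ≤ (ENNReal.ofReal C * (∫⁻ y in Ioi 0, f y ^ p) ^ (q / p)) ^ (1 / q) := by
        gcongr
        exact hbound f hf
    _ = ENNReal.ofReal (C ^ (1 / q)) * (∫⁻ y in Ioi 0, f y ^ p) ^ (1 / p) := by
        rw [ENNReal.mul_rpow_of_nonneg _ _ (by positivity), ← ENNReal.rpow_mul,
          ENNReal.ofReal_rpow_of_pos hC, show q / p * (1 / q) = 1 / p by field_simp]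

end sufficiency

theorem statement15_general
    (p q p' lam : ℝ) (hp : 1 < p) (hpq : p ≤ q) (hp' : p' = p / (p - 1))
    (hlam₁ : max (1 / p') (1 / q) < lam) :
    (∃ c > 0, ∀ f : ℝ → ℝ≥0∞, Measurable f →
      (∫⁻ x in Ioi (0:ℝ),
          TK (fun x y => ENNReal.ofReal ((x ^ 2 + y ^ 2) ^ (-(lam / 2)))) f x ^ q) ^ (1 / q) ≤
        ENNReal.ofReal c * (∫⁻ y in Ioi (0:ℝ), f y ^ p) ^ (1 / p)) ↔
    1 / q = lam - 1 / p' := by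
  have hpp' : p.HolderConjugate p' := (Real.holderConjugate_iff_eq_conjExponent hp).2 hp'
  have hq : 0 < q := by linarith
  have hlam : 0 ≤ lam := ((one_div_pos.2 hq).trans_le (le_max_right _ _)).trans hlam₁ |>.le
  have hinv : 1 / p + 1 / p' = 1 := by rw [one_div, one_div]; exact hpp'.inv_add_inv_eq_one
  constructor
  · intro hbounded
    linarith [eq_of_isTKBounded_radialKernel hpp'.pos hq hlam hbounded]
  · exact isTKBounded_radialKernel hpp' hpq

theorem statement15
    (p q p' lam : ℝ) (hp : 1 < p) (hpq : p ≤ q) (hp' : p' = p / (p - 1))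
    (hlam₁ : max (1 / p') (1 / q) < lam) (hlam₂ : lam < 1) :
    (∃ c > 0, ∀ f : ℝ → ℝ≥0∞, Measurable f →
      (∫⁻ x in Ioi (0:ℝ),
          TK (fun x y => ENNReal.ofReal ((x ^ 2 + y ^ 2) ^ (-(lam / 2)))) f x ^ q) ^ (1 / q) ≤
        ENNReal.ofReal c * (∫⁻ y in Ioi (0:ℝ), f y ^ p) ^ (1 / p)) ↔
    1 / q = lam - 1 / p' :=
  statement15_general p q p' lam hp hpq hp' hlam₁

end
end

section
/- Let K ∈ M_+(ℝ_+×ℝ_+) be homogeneous of degree −1, i.e., K(λx, λy) = λ^{-1} K(x,y) for all λ, x, y ∈ ℝ_+. Let Φ₁, Φ₂ be N-functions and u₁, u₂ weights, and define the dilation function h(t) = inf{ M > 0 : ρ_{Φ₁,u₁}( s ↦ f(ts) ) ≤ M ρ_{Φ₂,u₂}(f) for all f ∈ M_+(ℝ_+) } for t ∈ ℝ_+. If ∫_{ℝ_+} K(1,t) h(t) dt < ∞, then there is C > 0, independent of f, with ρ_{Φ₁,u₁}(T_K f) ≤ C ρ_{Φ₂,u₂}(f) for all f ∈ M_+(ℝ_+).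 In particular, one has the pointwise identity (T_K f)(x) = ∫_{ℝ_+} K(1,t) f(tx) dt for all x ∈ ℝ_+. -/
open MeasureTheory Set
open scoped ENNReal

noncomputable section

/-!
Substituting `y = t x` and using homogeneity, `T_K f (x) = ∫ K(1,t) f(t x) dt`, so `T_K f` is a
`K(1,·)`-weighted superposition of dilates of `f`. The gauge `ρ = ρ_{Φ,u}` satisfies Minkowski's
integral inequality `ρ(∫ G t dt) ≤ ∫ ρ(G t) dt` (Jensen's inequality for `Φ` with the weights
`ρ(G t) / ∫ ρ(G s) ds`) and is homogeneous, hence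
`ρ₁(T_K f) ≤ ∫ K(1,t) ρ₁(f(t ·)) dt ≤ (∫ K(1,t) h(t) dt) ρ₂(f)`.
-/

@[simp]
lemma extE_top (Φ : ℝ → ℝ) : extE Φ ⊤ = ⊤ := if_pos rfl

lemma extE_ofReal (Φ : ℝ → ℝ) {a : ℝ} (ha : 0 ≤ a) :
    extE Φ (ENNReal.ofReal a) = ENNReal.ofReal (Φ a) := by
  simp [extE, ha]

namespace IsNFunction

variable {Φ φ : ℝ → ℝ}

lemma intervalIntegrable_zero (hΦ : IsNFunction Φ φ) {b : ℝ} (hb : 0 ≤ b) :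
    IntervalIntegrable φ volume 0 b := by
  rw [intervalIntegrable_iff_integrableOn_Ioc_of_le hb]
  have hmono : MonotoneOn φ (Ioc 0 b) := hΦ.1.monotoneOn.mono fun t ht => ht.1
  refine Integrable.mono' (integrableOn_const measure_Ioc_lt_top.ne (C := φ b))
    (aemeasurable_restrict_of_monotoneOn measurableSet_Ioc hmono).aestronglyMeasurable
    ((ae_restrict_iff' measurableSet_Ioc).2 (ae_of_all _ fun t ht => ?_))
  rw [Real.norm_of_nonneg (hΦ.2.1 ht.1).le]
  exact hmono ht ⟨ht.1.trans_le ht.2, le_rfl⟩ ht.2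

lemma intervalIntegrable (hΦ : IsNFunction Φ φ) {a b : ℝ} (ha : 0 ≤ a) (hb : 0 ≤ b) :
    IntervalIntegrable φ volume a b :=
  (hΦ.intervalIntegrable_zero ha).symm.trans (hΦ.intervalIntegrable_zero hb)

lemma sub_eq_integral (hΦ : IsNFunction Φ φ) {a b : ℝ} (ha : 0 ≤ a) (hb : 0 ≤ b) :
    Φ b - Φ a = ∫ t in a..b, φ t := by
  rw [hΦ.2.2.2 a ha, hΦ.2.2.2 b hb, intervalIntegral.integral_interval_sub_left
    (hΦ.intervalIntegrable_zero hb) (hΦ.intervalIntegrable_zero ha)]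

lemma map_zero (hΦ : IsNFunction Φ φ) : Φ 0 = 0 := by
  simp [hΦ.2.2.2 0 le_rfl]

lemma monotoneOn (hΦ : IsNFunction Φ φ) : MonotoneOn Φ (Ici 0) := by
  intro a ha b hb hab
  have hφ := intervalIntegral.integral_mono_on_of_le_Ioo hab intervalIntegrable_const
    (hΦ.intervalIntegrable ha hb) fun t ht => (hΦ.2.1 (lt_of_le_of_lt ha ht.1)).le
  have := hΦ.sub_eq_integral ha hb
  simp only [intervalIntegral.integral_zero] at hφ
  linarith

lemma nonneg (hΦ : IsNFunction Φ φ) {a : ℝ} (ha : 0 ≤ a) : 0 ≤ Φ a :=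
  hΦ.map_zero ▸ hΦ.monotoneOn self_mem_Ici ha ha

/-- Convexity of `Φ`: its supporting line at `a` has slope `φ a`. -/
lemma add_mul_sub_le (hΦ : IsNFunction Φ φ) {a b : ℝ} (ha : 0 < a) (hb : 0 ≤ b) :
    Φ a + φ a * (b - a) ≤ Φ b := by
  have hdiff := hΦ.sub_eq_integral ha.le hb
  rcases le_total a b with hab | hba
  · have h := intervalIntegral.integral_mono_on_of_le_Ioo hab intervalIntegrable_const
      (hΦ.intervalIntegrable ha.le hb) fun t ht => (hΦ.1 ha (ha.trans ht.1) ht.1).le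
    rw [intervalIntegral.integral_const, smul_eq_mul] at h
    linarith
  · have h := intervalIntegral.integral_mono_on_of_le_Ioo hba (hΦ.intervalIntegrable hb ha.le)
      intervalIntegrable_const fun t ht => (hΦ.1 (hb.trans_lt ht.1) ha ht.2).le
    rw [intervalIntegral.integral_const, smul_eq_mul, intervalIntegral.integral_symm] at h
    linarith

lemma mul_sub_nonneg (hΦ : IsNFunction Φ φ) {a : ℝ} (ha : 0 < a) : 0 ≤ φ a * a - Φ a := by
  have := hΦ.add_mul_sub_le ha le_rfl
  rw [hΦ.map_zero] at this
  linarith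

lemma exists_lt (hΦ : IsNFunction Φ φ) (M : ℝ) : ∃ s ≥ 0, M < Φ s := by
  have hφ : 0 < φ 1 := hΦ.2.1 (mem_Ioi.2 one_pos)
  set s := 1 + (|M - Φ 1| + 1) / φ 1 with hs_def
  have hs : φ 1 * (s - 1) = |M - Φ 1| + 1 := by rw [hs_def]; field_simp; ring
  have hs0 : 0 ≤ s := by positivity
  have := hΦ.add_mul_sub_le one_pos hs0
  exact ⟨s, hs0, by linarith [le_abs_self (M - Φ 1)]⟩

lemma extE_zero (hΦ : IsNFunction Φ φ) : extE Φ 0 = 0 := by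
  simp [extE, hΦ.map_zero]

lemma monotone_extE (hΦ : IsNFunction Φ φ) : Monotone (extE Φ) := by
  intro a b hab
  rcases eq_or_ne b ⊤ with rfl | hb
  · simp
  have ha : a ≠ ⊤ := ne_top_of_le_ne_top hb hab
  simp only [extE, if_neg ha, if_neg hb]
  exact ENNReal.ofReal_le_ofReal
    (hΦ.monotoneOn ENNReal.toReal_nonneg ENNReal.toReal_nonneg (ENNReal.toReal_mono hb hab))

lemma measurable_extE (hΦ : IsNFunction Φ φ) : Measurable (extE Φ) :=
  hΦ.monotone_extE.measurable

lemma iSup_extE_nat_mul (hΦ : IsNFunction Φ φ) {a : ℝ≥0∞} (ha : a ≠ 0) :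
    ⨆ n : ℕ, extE Φ (n * a) = ⊤ := by
  refine iSup_eq_top.2 fun b hb => ?_
  obtain ⟨s, hs0, hs⟩ := hΦ.exists_lt b.toReal
  obtain ⟨n, hn⟩ := ENNReal.exists_nat_mul_gt ha (ENNReal.ofReal_ne_top (r := s))
  refine ⟨n, ?_⟩
  calc b = ENNReal.ofReal b.toReal := (ENNReal.ofReal_toReal hb.ne).symm
    _ < ENNReal.ofReal (Φ s) :=
      (ENNReal.ofReal_lt_ofReal_iff (ENNReal.toReal_nonneg.trans_lt hs)).2 hs
    _ = extE Φ (ENNReal.ofReal s) := (extE_ofReal Φ hs0).symm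
    _ ≤ extE Φ (n * a) := hΦ.monotone_extE hn.le

/-- Young's inequality: `φ a * a - Φ a` is the complementary function at `φ a`. -/
lemma ofReal_mul_le_extE_add (hΦ : IsNFunction Φ φ) {a : ℝ} (ha : 0 < a) (b : ℝ≥0∞) :
    ENNReal.ofReal (φ a) * b ≤ extE Φ b + ENNReal.ofReal (φ a * a - Φ a) := by
  rcases eq_or_ne b ⊤ with rfl | hb
  · simp
  rw [← ENNReal.ofReal_toReal hb, ← ENNReal.ofReal_mul (hΦ.2.1 ha).le,
    extE_ofReal Φ ENNReal.toReal_nonneg]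
  refine (ENNReal.ofReal_le_ofReal ?_).trans ENNReal.ofReal_add_le
  nlinarith [hΦ.add_mul_sub_le ha (ENNReal.toReal_nonneg (a := b))]

/-- Jensen's inequality; `Φ 0 = 0` allows sub-probability weights. -/
theorem extE_lintegral_mul_le (hΦ : IsNFunction Φ φ) {α : Type*} [MeasurableSpace α]
    {μ : Measure α} {w : α → ℝ≥0∞} (hw : Measurable w) (hw1 : ∫⁻ t, w t ∂μ ≤ 1)
    (g : α → ℝ≥0∞) :
    extE Φ (∫⁻ t, g t * w t ∂μ) ≤ ∫⁻ t, extE Φ (g t) * w t ∂μ := by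
  set R := ∫⁻ t, extE Φ (g t) * w t ∂μ
  have supporting : ∀ a > 0, ENNReal.ofReal (φ a) * ∫⁻ t, g t * w t ∂μ ≤
      R + ENNReal.ofReal (φ a * a - Φ a) := by
    intro a ha
    set c := ENNReal.ofReal (φ a * a - Φ a)
    calc ENNReal.ofReal (φ a) * ∫⁻ t, g t * w t ∂μ
        = ∫⁻ t, ENNReal.ofReal (φ a) * g t * w t ∂μ := by
          rw [← lintegral_const_mul' _ _ ENNReal.ofReal_ne_top]
          simp only [mul_assoc]
      _ ≤ ∫⁻ t, (extE Φ (g t) * w t + c * w t) ∂μ := lintegral_mono fun t => by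
          rw [← add_mul]
          gcongr
          exact hΦ.ofReal_mul_le_extE_add ha (g t)
      _ = R + c * ∫⁻ t, w t ∂μ := by
          rw [lintegral_add_right' _ (hw.const_mul c).aemeasurable, lintegral_const_mul c hw]
      _ ≤ R + c := by gcongr; exact mul_le_of_le_one_right' hw1
  generalize hA : ∫⁻ t, g t * w t ∂μ = A at supporting ⊢
  rcases eq_or_ne A ⊤ with rfl | hAt
  · have h1 := supporting 1 one_pos
    rw [ENNReal.mul_top (by simpa using hΦ.2.1 (mem_Ioi.2 one_pos)), top_le_iff,
      ENNReal.add_eq_top] at h1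
    simp [h1.resolve_right ENNReal.ofReal_ne_top]
  obtain ⟨a, ha0, rfl⟩ : ∃ a ≥ 0, ENNReal.ofReal a = A :=
    ⟨A.toReal, ENNReal.toReal_nonneg, ENNReal.ofReal_toReal hAt⟩
  rcases ha0.eq_or_lt with rfl | ha
  · simp [hΦ.extE_zero]
  have h := supporting a ha
  rw [← ENNReal.ofReal_mul (hΦ.2.1 ha).le] at h
  rw [extE_ofReal Φ ha0, ← ENNReal.add_le_add_iff_right ENNReal.ofReal_ne_top,
    ← ENNReal.ofReal_add (hΦ.nonneg ha0) (hΦ.mul_sub_nonneg ha)]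
  convert h using 2
  ring

end IsNFunction

def orliczModular (Φ u : ℝ → ℝ) (g : ℝ → ℝ≥0∞) (l : ℝ≥0∞) : ℝ≥0∞ :=
  ∫⁻ x in Ioi (0:ℝ), extE Φ (g x / l) * ENNReal.ofReal (u x)

section Gauge

variable {α : Type*} [MeasurableSpace α] {Φ φ u : ℝ → ℝ} {g g' : ℝ → ℝ≥0∞}

lemma ogauge_le_of_orliczModular_le_one {l : ℝ≥0∞} (hl : 0 < l)
    (h : orliczModular Φ u g l ≤ 1) : ogauge Φ u g ≤ l :=
  sInf_le ⟨hl, h⟩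

lemma ogauge_le_of_forall_lt {a : ℝ≥0∞} (h : ∀ l, a < l → orliczModular Φ u g l ≤ 1) :
    ogauge Φ u g ≤ a :=
  le_of_forall_gt_imp_ge_of_dense fun l hl =>
    ogauge_le_of_orliczModular_le_one (zero_le.trans_lt hl) (h l hl)

lemma ogauge_congr (h : ∀ x > 0, g x = g' x) : ogauge Φ u g = ogauge Φ u g' := by
  have hmod : ∀ l, orliczModular Φ u g l = orliczModular Φ u g' l := fun l =>
    setLIntegral_congr_fun measurableSet_Ioi fun x hx => by rw [h x hx]
  change sInf {l | 0 < l ∧ orliczModular Φ u g l ≤ 1} =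
    sInf {l | 0 < l ∧ orliczModular Φ u g' l ≤ 1}
  simp only [hmod]

namespace IsNFunction

lemma orliczModular_antitone (hΦ : IsNFunction Φ φ) (u : ℝ → ℝ) (g : ℝ → ℝ≥0∞) :
    Antitone (orliczModular Φ u g) := fun _ _ hll' =>
  lintegral_mono fun _ => by gcongr; exact hΦ.monotone_extE (ENNReal.div_le_div_left hll' _)

lemma orliczModular_le_one_of_ogauge_lt (hΦ : IsNFunction Φ φ) {l : ℝ≥0∞}
    (h : ogauge Φ u g < l) : orliczModular Φ u g l ≤ 1 := by
  obtain ⟨m, hm, hml⟩ := sInf_lt_iff.1 h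
  exact (hΦ.orliczModular_antitone u g hml.le).trans hm.2

lemma measurable_orliczModular (hΦ : IsNFunction Φ φ) (hu : Measurable u)
    {G : α → ℝ → ℝ≥0∞} (hG : Measurable (Function.uncurry G)) {σ : α → ℝ≥0∞}
    (hσ : Measurable σ) : Measurable fun t => orliczModular Φ u (G t) (σ t) :=
  Measurable.lintegral_prod_right' (f := fun p : α × ℝ => extE Φ (G p.1 p.2 / σ p.1) *
    ENNReal.ofReal (u p.2)) <| (hΦ.measurable_extE.comp (hG.div (hσ.comp measurable_fst))).mul
      (ENNReal.measurable_ofReal.comp (hu.comp measurable_snd))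

lemma measurable_ogauge (hΦ : IsNFunction Φ φ) (hu : Measurable u) {G : α → ℝ → ℝ≥0∞}
    (hG : Measurable (Function.uncurry G)) : Measurable fun t => ogauge Φ u (G t) := by
  refine measurable_of_Iio fun c => ?_
  have hpre : (fun t => ogauge Φ u (G t)) ⁻¹' Iio c = ⋃ q : ℚ,
      ⋃ (_ : 0 < ((q : ℝ).toNNReal : ℝ≥0∞) ∧ ((q : ℝ).toNNReal : ℝ≥0∞) < c),
        {t | orliczModular Φ u (G t) ((q : ℝ).toNNReal) ≤ 1} := by
    ext t
    simp only [mem_preimage, mem_Iio, mem_iUnion, mem_ofPred_eq, exists_prop]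
    constructor
    · intro ht
      obtain ⟨m, hm, hmc⟩ := sInf_lt_iff.1 ht
      obtain ⟨q, -, hmq, hqc⟩ := ENNReal.lt_iff_exists_rat_btwn.1 hmc
      exact ⟨q, ⟨hm.1.trans hmq, hqc⟩, (hΦ.orliczModular_antitone u _ hmq.le).trans hm.2⟩
    · rintro ⟨q, ⟨hq, hqc⟩, hmod⟩
      exact (ogauge_le_of_orliczModular_le_one hq hmod).trans_lt hqc
  rw [hpre]
  exact MeasurableSet.iUnion fun q => MeasurableSet.iUnion fun _ =>
    hΦ.measurable_orliczModular hu hG measurable_const measurableSet_Iic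

/-- An `Φ`-gauge vanishes only on functions that vanish `u`-a.e., so it is unchanged by
multiplying the function by `⊤`. -/
lemma ogauge_top_mul_eq_zero (hΦ : IsNFunction Φ φ) (hu : Measurable u) (hg : Measurable g)
    (h0 : ogauge Φ u g = 0) : ogauge Φ u (fun x => ⊤ * g x) = 0 := by
  refine le_antisymm (ogauge_le_of_forall_lt fun l _ => ?_) zero_le
  have hn : ∀ n : ℕ, orliczModular Φ u g (n : ℝ≥0∞)⁻¹ ≤ 1 := fun n =>
    hΦ.orliczModular_le_one_of_ogauge_lt (by simp [h0])
  have hmeas : ∀ n : ℕ, Measurable fun x => extE Φ (n * g x) * ENNReal.ofReal (u x) :=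
    fun n => (hΦ.measurable_extE.comp (hg.const_mul _)).mul (ENNReal.measurable_ofReal.comp hu)
  have hmono : Monotone fun (n : ℕ) x => extE Φ (n * g x) * ENNReal.ofReal (u x) :=
    fun m n hmn x => by dsimp only; gcongr; exact hΦ.monotone_extE (by gcongr)
  calc orliczModular Φ u (fun x => ⊤ * g x) l
      ≤ ∫⁻ x in Ioi 0, ⨆ n : ℕ, extE Φ (n * g x) * ENNReal.ofReal (u x) :=
        lintegral_mono fun x => by
          rw [← ENNReal.iSup_mul]
          gcongr
          rcases eq_or_ne (g x) 0 with hx | hx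
          · simp [hx, hΦ.extE_zero]
          · rw [hΦ.iSup_extE_nat_mul hx]
            exact le_top
    _ = ⨆ n : ℕ, orliczModular Φ u g (n : ℝ≥0∞)⁻¹ := by
        rw [lintegral_iSup hmeas hmono]
        simp only [orliczModular, div_eq_mul_inv, inv_inv, mul_comm (g _)]
    _ ≤ 1 := iSup_le hn

lemma ogauge_const_mul_le (hΦ : IsNFunction Φ φ) (hu : Measurable u) (hg : Measurable g)
    (c : ℝ≥0∞) : ogauge Φ u (fun x => c * g x) ≤ c * ogauge Φ u g := by
  rcases eq_or_ne c ⊤ with rfl | hc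
  · rcases eq_or_ne (ogauge Φ u g) 0 with h0 | h0
    · rw [hΦ.ogauge_top_mul_eq_zero hu hg h0]
      exact zero_le
    · rw [ENNReal.top_mul h0]
      exact le_top
  refine ogauge_le_of_forall_lt fun m hm => ?_
  rcases eq_or_ne c 0 with rfl | hc0
  · simp [orliczModular, hΦ.extE_zero]
  have hlt : ogauge Φ u g < m / c :=
    (ENNReal.lt_div_iff_mul_lt (Or.inl hc0) (Or.inl hc)).2 (by rwa [mul_comm])
  have hdiv : ∀ x, c * g x / m = g x / (m / c) := fun x => by
    rw [← ENNReal.mul_div_mul_left (g x) (m / c) hc0 hc, ENNReal.mul_div_cancel hc0 hc]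
  simpa only [orliczModular, hdiv] using hΦ.orliczModular_le_one_of_ogauge_lt hlt

end IsNFunction

end Gauge

namespace IsNFunction

variable {α : Type*} [MeasurableSpace α] {Φ φ u : ℝ → ℝ}

/-- Jensen's inequality with the weights `σ t / l`, followed by Tonelli. -/
theorem orliczModular_lintegral_le_one (hΦ : IsNFunction Φ φ) (hu : Measurable u)
    {μ : Measure α} [SFinite μ] {G : α → ℝ → ℝ≥0∞} (hG : Measurable (Function.uncurry G))
    {σ : α → ℝ≥0∞} (hσm : Measurable σ)
    (hσ : ∀ᵐ t ∂μ, σ t ≠ 0 ∧ σ t ≠ ⊤ ∧ orliczModular Φ u (G t) (σ t) ≤ 1)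
    {l : ℝ≥0∞} (hl : l ≠ 0) (hσl : ∫⁻ t, σ t ∂μ ≤ l) :
    orliczModular Φ u (fun x => ∫⁻ t, G t x ∂μ) l ≤ 1 := by
  set w : α → ℝ≥0∞ := fun t => σ t / l
  have hw : Measurable w := hσm.div_const l
  have hw1 : ∫⁻ t, w t ∂μ ≤ 1 := by
    simp only [w, div_eq_mul_inv]
    rw [lintegral_mul_const _ hσm, ← div_eq_mul_inv]
    exact ENNReal.div_le_of_le_mul (by rwa [one_mul])
  have hsplit : ∀ x, (∫⁻ t, G t x ∂μ) / l = ∫⁻ t, G t x / σ t * w t ∂μ := fun x => by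
    rw [div_eq_mul_inv, ← lintegral_mul_const' _ _ (ENNReal.inv_ne_top.2 hl)]
    refine lintegral_congr_ae (hσ.mono fun t ht => ?_)
    simp only [w, div_eq_mul_inv]
    rw [mul_assoc, ← mul_assoc (σ t)⁻¹, ENNReal.inv_mul_cancel ht.1 ht.2.1, one_mul]
  have hjoint : Measurable fun p : ℝ × α =>
      extE Φ (G p.2 p.1 / σ p.2) * w p.2 * ENNReal.ofReal (u p.1) :=
    ((hΦ.measurable_extE.comp ((hG.comp measurable_swap).div (hσm.comp measurable_snd))).mul
      (hw.comp measurable_snd)).mul (ENNReal.measurable_ofReal.comp (hu.comp measurable_fst))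
  calc orliczModular Φ u (fun x => ∫⁻ t, G t x ∂μ) l
      = ∫⁻ x in Ioi 0, extE Φ (∫⁻ t, G t x / σ t * w t ∂μ) * ENNReal.ofReal (u x) := by
        simp only [orliczModular, hsplit]
    _ ≤ ∫⁻ x in Ioi 0, (∫⁻ t, extE Φ (G t x / σ t) * w t ∂μ) * ENNReal.ofReal (u x) :=
        lintegral_mono fun x => by gcongr; exact hΦ.extE_lintegral_mul_le hw hw1 _
    _ = ∫⁻ t, w t * orliczModular Φ u (G t) (σ t) ∂μ := by
        simp_rw [← lintegral_mul_const' _ _ ENNReal.ofReal_ne_top]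
        rw [lintegral_lintegral_swap hjoint.aemeasurable]
        refine lintegral_congr fun t => ?_
        have hGt : Measurable fun x => extE Φ (G t x / σ t) * ENNReal.ofReal (u x) :=
          (hΦ.measurable_extE.comp ((hG.comp measurable_prodMk_left).div_const _)).mul
            (ENNReal.measurable_ofReal.comp hu)
        rw [orliczModular, ← lintegral_const_mul _ hGt]
        exact lintegral_congr fun x => by ring
    _ ≤ ∫⁻ t, w t ∂μ := lintegral_mono_ae (hσ.mono fun t ht => mul_le_of_le_one_right' ht.2.2)
    _ ≤ 1 := hw1

/-- Minkowski's integral inequality, from the previous lemma with `σ t = ρ(G t) + ε t` for a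
small positive integrable `ε`, which keeps `σ` away from `0`. -/
theorem ogauge_lintegral_le (hΦ : IsNFunction Φ φ) (hu : Measurable u) {μ : Measure α}
    [SigmaFinite μ] {G : α → ℝ → ℝ≥0∞} (hG : Measurable (Function.uncurry G)) :
    ogauge Φ u (fun x => ∫⁻ t, G t x ∂μ) ≤ ∫⁻ t, ogauge Φ u (G t) ∂μ := by
  have hρ := hΦ.measurable_ogauge hu hG
  rcases eq_or_ne (∫⁻ t, ogauge Φ u (G t) ∂μ) ⊤ with hR | hR
  · rw [hR]
    exact le_top
  refine ENNReal.le_of_forall_pos_le_add fun δ hδ _ => ?_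
  obtain ⟨ε, hε0, hεm, hεδ⟩ :=
    exists_pos_lintegral_lt_of_sigmaFinite μ (ENNReal.coe_ne_zero.2 hδ.ne')
  refine ogauge_le_of_orliczModular_le_one
    ((ENNReal.coe_pos.2 hδ).trans_le le_add_self)
    (hΦ.orliczModular_lintegral_le_one hu hG (σ := fun t => ogauge Φ u (G t) + ε t)
      (hρ.add hεm.coe_nnreal_ennreal) ?_ (by simp [hδ.ne']) ?_)
  · filter_upwards [ae_lt_top hρ hR] with t ht
    have hεt : (ε t : ℝ≥0∞) ≠ 0 := ENNReal.coe_ne_zero.2 (hε0 t).ne'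
    exact ⟨by simp [hεt], ENNReal.add_ne_top.2 ⟨ht.ne, ENNReal.coe_ne_top⟩,
      hΦ.orliczModular_le_one_of_ogauge_lt (ENNReal.lt_add_right ht.ne hεt)⟩
  · rw [lintegral_add_left hρ]
    gcongr

end IsNFunction

/-- The dilation function `h(t)` of the statement. -/
def dilationNorm (Φ₁ u₁ Φ₂ u₂ : ℝ → ℝ) (t : ℝ) : ℝ≥0∞ :=
  sInf {M : ℝ≥0∞ | 0 < M ∧ ∀ f : ℝ → ℝ≥0∞, Measurable f →
    ogauge Φ₁ u₁ (fun s => f (t * s)) ≤ M * ogauge Φ₂ u₂ f}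

section Dilation

variable {Φ₁ u₁ Φ₂ u₂ : ℝ → ℝ} {f : ℝ → ℝ≥0∞}

lemma ogauge_comp_mul_le_dilationNorm_mul (hf : Measurable f) {lam : ℝ≥0∞}
    (hlam : ogauge Φ₂ u₂ f < lam) (hlam_top : lam ≠ ⊤) (t : ℝ) :
    ogauge Φ₁ u₁ (fun s => f (t * s)) ≤ dilationNorm Φ₁ u₁ Φ₂ u₂ t * lam := by
  refine ENNReal.le_mul_of_forall_lt (Or.inr hlam_top) (Or.inr (pos_of_gt hlam).ne')
    fun M hM lam' hlam' => ?_
  obtain ⟨m, ⟨-, hm⟩, hmM⟩ := sInf_lt_iff.1 hM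
  exact (hm f hf).trans (mul_le_mul' hmM.le (hlam.trans hlam').le)

/-- The dilation function may be infinite, and `ogauge Φ₂ u₂ f` zero, so the bound
is first proved for every `lam > ogauge Φ₂ u₂ f` and then passed to the limit. -/
lemma lintegral_mul_ogauge_comp_mul_le {μ : Measure ℝ} (w : ℝ → ℝ≥0∞) (hf : Measurable f)
    (hw : ∫⁻ t, w t * dilationNorm Φ₁ u₁ Φ₂ u₂ t ∂μ ≠ ⊤) (hρ : ogauge Φ₂ u₂ f ≠ ⊤) :
    ∫⁻ t, w t * ogauge Φ₁ u₁ (fun s => f (t * s)) ∂μ ≤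
      (∫⁻ t, w t * dilationNorm Φ₁ u₁ Φ₂ u₂ t ∂μ) * ogauge Φ₂ u₂ f := by
  refine ENNReal.le_mul_of_forall_lt (Or.inr hρ) (Or.inl hw) fun I hI lam hlam => ?_
  rcases eq_or_ne lam ⊤ with rfl | hlam_top
  · rw [ENNReal.mul_top (pos_of_gt hI).ne']
    exact le_top
  calc ∫⁻ t, w t * ogauge Φ₁ u₁ (fun s => f (t * s)) ∂μ
      ≤ ∫⁻ t, w t * dilationNorm Φ₁ u₁ Φ₂ u₂ t * lam ∂μ := lintegral_mono fun t => by
        rw [mul_assoc]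
        gcongr
        exact ogauge_comp_mul_le_dilationNorm_mul hf hlam hlam_top t
    _ = (∫⁻ t, w t * dilationNorm Φ₁ u₁ Φ₂ u₂ t ∂μ) * lam := lintegral_mul_const' _ _ hlam_top
    _ ≤ I * lam := by gcongr

end Dilation

lemma lintegral_comp_mul_left_Ioi (g : ℝ → ℝ≥0∞) (a : ℝ) {b : ℝ} (hb : 0 < b) :
    ENNReal.ofReal b * ∫⁻ x in Ioi a, g (b * x) = ∫⁻ x in Ioi (b * a), g x := by
  have he := measurableEmbedding_mulLeft₀ hb.ne'
  have hpre : (b * ·) ⁻¹' Ioi (b * a) = Ioi a := by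
    ext x
    simp [mul_lt_mul_iff_right₀ hb]
  rw [← hpre, ← he.lintegral_map, ← he.restrict_map, Real.map_volume_mul_left hb.ne',
    Measure.restrict_smul, lintegral_smul_measure, smul_eq_mul, ← mul_assoc,
    abs_of_pos (inv_pos.2 hb), ← ENNReal.ofReal_mul hb.le, mul_inv_cancel₀ hb.ne',
    ENNReal.ofReal_one, one_mul]

lemma TK_eq_lintegral_comp_mul {K : ℝ → ℝ → ℝ≥0∞}
    (hhom : ∀ l > 0, ∀ x > 0, ∀ y > 0, K (l * x) (l * y) = K x y / ENNReal.ofReal l)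
    (f : ℝ → ℝ≥0∞) {x : ℝ} (hx : 0 < x) :
    TK K f x = ∫⁻ t in Ioi (0:ℝ), K 1 t * f (t * x) := by
  have hscale := lintegral_comp_mul_left_Ioi (fun y => K x y * f y) 0 hx
  rw [mul_zero] at hscale
  rw [TK, ← hscale, ← lintegral_const_mul' _ _ ENNReal.ofReal_ne_top]
  refine setLIntegral_congr_fun measurableSet_Ioi fun t ht => ?_
  have hK : K x (x * t) = K 1 t / ENNReal.ofReal x := by
    simpa using hhom x hx 1 one_pos t ht
  rw [hK, ← mul_assoc, ENNReal.mul_div_cancel (by simpa using hx) ENNReal.ofReal_ne_top,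
    mul_comm x t]

theorem statement17_general
    (K : ℝ → ℝ → ℝ≥0∞) (hK : Measurable (Function.uncurry K))
    (hhom : ∀ l > 0, ∀ x > 0, ∀ y > 0, K (l * x) (l * y) = K x y / ENNReal.ofReal l)
    (Φ₁ φ₁ Φ₂ : ℝ → ℝ)
    (hΦ₁ : IsNFunction Φ₁ φ₁)
    (u₁ u₂ : ℝ → ℝ) (hu₁ : IsWeight u₁)
    (h : ℝ → ℝ≥0∞)
    (hh : ∀ t, h t = sInf {M : ℝ≥0∞ | 0 < M ∧ ∀ f : ℝ → ℝ≥0∞, Measurable f →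
      ogauge Φ₁ u₁ (fun s => f (t * s)) ≤ M * ogauge Φ₂ u₂ f})
    (hint : (∫⁻ t in Ioi (0:ℝ), K 1 t * h t) < ⊤) :
    (∃ C > 0, ∀ f : ℝ → ℝ≥0∞, Measurable f →
      ogauge Φ₁ u₁ (TK K f) ≤ ENNReal.ofReal C * ogauge Φ₂ u₂ f) ∧
    (∀ f : ℝ → ℝ≥0∞, Measurable f → ∀ x > 0,
      TK K f x = ∫⁻ t in Ioi (0:ℝ), K 1 t * f (t * x)) := by
  obtain rfl : h = dilationNorm Φ₁ u₁ Φ₂ u₂ := funext hh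
  set I := ∫⁻ t in Ioi (0:ℝ), K 1 t * dilationNorm Φ₁ u₁ Φ₂ u₂ t
  refine ⟨⟨I.toReal + 1, by positivity, fun f hf => ?_⟩,
    fun f _ x hx => TK_eq_lintegral_comp_mul hhom f hx⟩
  rcases eq_or_ne (ogauge Φ₂ u₂ f) ⊤ with hρ | hρ
  · rw [hρ, ENNReal.mul_top (by simp; positivity)]
    exact le_top
  have hG : Measurable (Function.uncurry fun t x => K 1 t * f (t * x)) :=
    (hK.comp (measurable_const.prodMk measurable_fst)).mul
      (hf.comp (measurable_fst.mul measurable_snd))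
  calc ogauge Φ₁ u₁ (TK K f)
      = ogauge Φ₁ u₁ (fun x => ∫⁻ t in Ioi 0, K 1 t * f (t * x)) :=
        ogauge_congr fun x hx => TK_eq_lintegral_comp_mul hhom f hx
    _ ≤ ∫⁻ t in Ioi 0, ogauge Φ₁ u₁ (fun x => K 1 t * f (t * x)) :=
        hΦ₁.ogauge_lintegral_le hu₁.1 hG
    _ ≤ ∫⁻ t in Ioi 0, K 1 t * ogauge Φ₁ u₁ (fun x => f (t * x)) :=
        lintegral_mono fun t => hΦ₁.ogauge_const_mul_le hu₁.1 (hf.comp (measurable_const_mul t)) _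
    _ ≤ I * ogauge Φ₂ u₂ f := lintegral_mul_ogauge_comp_mul_le _ hf hint.ne hρ
    _ ≤ ENNReal.ofReal (I.toReal + 1) * ogauge Φ₂ u₂ f := by
        gcongr
        exact (ENNReal.le_ofReal_iff_toReal_le hint.ne (by positivity)).2 (by linarith)

theorem statement17
    (K : ℝ → ℝ → ℝ≥0∞) (hK : Measurable (Function.uncurry K))
    (hhom : ∀ l > 0, ∀ x > 0, ∀ y > 0, K (l * x) (l * y) = K x y / ENNReal.ofReal l)
    (Φ₁ φ₁ Φ₂ φ₂ : ℝ → ℝ)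
    (hΦ₁ : IsNFunction Φ₁ φ₁) (hΦ₂ : IsNFunction Φ₂ φ₂)
    (u₁ u₂ : ℝ → ℝ) (hu₁ : IsWeight u₁) (hu₂ : IsWeight u₂)
    (h : ℝ → ℝ≥0∞)
    (hh : ∀ t, h t = sInf {M : ℝ≥0∞ | 0 < M ∧ ∀ f : ℝ → ℝ≥0∞, Measurable f →
      ogauge Φ₁ u₁ (fun s => f (t * s)) ≤ M * ogauge Φ₂ u₂ f})
    (hint : (∫⁻ t in Ioi (0:ℝ), K 1 t * h t) < ⊤) :
    (∃ C > 0, ∀ f : ℝ → ℝ≥0∞, Measurable f →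
      ogauge Φ₁ u₁ (TK K f) ≤ ENNReal.ofReal C * ogauge Φ₂ u₂ f) ∧
    (∀ f : ℝ → ℝ≥0∞, Measurable f → ∀ x > 0,
      TK K f x = ∫⁻ t in Ioi (0:ℝ), K 1 t * f (t * x)) :=
  statement17_general K hK hhom Φ₁ φ₁ Φ₂ hΦ₁ u₁ u₂ hu₁ h hh hint

end
end
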